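/- arXiv:2010.09419 — 8 statements merged into one kernel-verified Lean document; each statement's English description precedes it below -/
import Mathlib

section
/- Let μ, ν be finite Borel measures on ℝⁿ and d ≥ 1 an integer. If Δ(μ,ν) ≤ 1 then η_d(μ,ν) ≤ Δ(μ,ν)^{1/(d+1)}, and if Δ(μ,ν) ≥ 1 then η_d(μ,ν) ≤ Δ(μ,ν)^{1/d}. In particular, if a sequence (μ_i) of finite Borel measures satisfies Δ(μ_i, μ) → 0, then η_d(μ_i, μ) → 0. -/
/-!
Testing against the plateau function `y ↦ max (c - infDist y B) 0` with `c = min δ 1`, which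
is `1`-Lipschitz, bounded by `1`, equal to `c` on `B` and zero outside `B^δ`, gives
`c μ(B) ≤ c ν(B^δ) + Δ(μ,ν)`. Hence `η_d ≤ δ` as soon as `Δ ≤ min δ 1 · δ^d`, and the two
bounds come from choosing `δ` with `δ^(d+1) = Δ` when `Δ ≤ 1` and `δ^d = Δ` when `Δ ≥ 1`.
-/

open MeasureTheory Filter

noncomputable section

/-- Localized bounded Lipschitz (flat) distance
`Δ_U(μ,ν) = sup { ∫φ dμ − ∫φ dν : φ 1-Lipschitz, |φ| ≤ 1, φ = 0 outside U }`. -/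
def flatDistIn {X : Type*} [MeasurableSpace X] [PseudoMetricSpace X]
    (U : Set X) (μ ν : Measure X) : ℝ :=
  sSup {r | ∃ φ : X → ℝ, LipschitzWith 1 φ ∧ (∀ x, |φ x| ≤ 1) ∧ (∀ x ∉ U, φ x = 0) ∧
    r = (∫ x, φ x ∂μ) - ∫ x, φ x ∂ν}

/-- Bounded Lipschitz (flat) distance `Δ(μ,ν)`. -/
def flatDist {X : Type*} [MeasurableSpace X] [PseudoMetricSpace X]
    (μ ν : Measure X) : ℝ :=
  flatDistIn Set.univ μ ν

/-- Modified Prokhorov distance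
`η_d(μ,ν) = inf { δ > 0 : μ(B) ≤ ν(B^δ) + δ^d and ν(B) ≤ μ(B^δ) + δ^d for all closed balls B }`,
where `B^δ` is the open `δ`-neighbourhood (thickening) of `B`. -/
def etaDist {X : Type*} [MeasurableSpace X] [PseudoMetricSpace X]
    (d : ℕ) (μ ν : Measure X) : ℝ :=
  sInf {δ : ℝ | 0 < δ ∧ ∀ (x : X) (r : ℝ),
    μ (Metric.closedBall x r) ≤
        ν (Metric.thickening δ (Metric.closedBall x r)) + ENNReal.ofReal (δ ^ d) ∧
    ν (Metric.closedBall x r) ≤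
        μ (Metric.thickening δ (Metric.closedBall x r)) + ENNReal.ofReal (δ ^ d)}

open Metric

section Plateau

variable {X : Type*} [PseudoMetricSpace X]

def plateau (s : Set X) (c : ℝ) (y : X) : ℝ := max (c - infDist y s) 0

lemma lipschitzWith_plateau (s : Set X) (c : ℝ) : LipschitzWith 1 (plateau s c) :=
  (LipschitzWith.of_dist_le_mul fun a b => by
    rw [dist_sub_left]; exact (lipschitz_infDist_pt s).dist_le_mul a b).max_const 0

lemma plateau_nonneg (s : Set X) (c : ℝ) (y : X) : 0 ≤ plateau s c y :=
  le_max_right _ _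

lemma plateau_le {c : ℝ} (hc : 0 ≤ c) (s : Set X) (y : X) : plateau s c y ≤ c :=
  max_le (sub_le_self c infDist_nonneg) hc

lemma plateau_eq_of_mem {c : ℝ} (hc : 0 ≤ c) {s : Set X} {y : X} (hy : y ∈ s) :
    plateau s c y = c := by
  rw [plateau, infDist_zero_of_mem hy, sub_zero, max_eq_left hc]

lemma plateau_eq_zero_of_notMem_thickening {s : Set X} (hs : s.Nonempty) {c : ℝ} {y : X}
    (hy : y ∉ thickening c s) : plateau s c y = 0 := by
  rw [mem_thickening_iff_infDist_lt hs, not_lt] at hy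
  exact max_eq_right (sub_nonpos.2 hy)

end Plateau

section FlatDist

variable {X : Type*} [MeasurableSpace X] [PseudoMetricSpace X]

lemma bddAbove_flatDistIn_set (U : Set X) (μ ν : Measure X) [IsFiniteMeasure μ]
    [IsFiniteMeasure ν] :
    BddAbove {r | ∃ φ : X → ℝ, LipschitzWith 1 φ ∧ (∀ x, |φ x| ≤ 1) ∧ (∀ x ∉ U, φ x = 0) ∧
      r = (∫ x, φ x ∂μ) - ∫ x, φ x ∂ν} := by
  refine ⟨μ.real Set.univ + ν.real Set.univ, ?_⟩
  rintro r ⟨φ, -, hφ, -, rfl⟩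
  have hbound (ρ : Measure X) [IsFiniteMeasure ρ] : |∫ x, φ x ∂ρ| ≤ ρ.real Set.univ := by
    simpa using norm_integral_le_of_norm_le_const (μ := ρ)
      (.of_forall fun x => (Real.norm_eq_abs _).trans_le (hφ x))
  linarith [abs_le.1 (hbound μ), abs_le.1 (hbound ν)]

variable (μ ν : Measure X) [IsFiniteMeasure μ] [IsFiniteMeasure ν]

lemma integral_sub_integral_le_flatDist {φ : X → ℝ} (hφ : LipschitzWith 1 φ)
    (hφ_le : ∀ x, |φ x| ≤ 1) : (∫ x, φ x ∂μ) - ∫ x, φ x ∂ν ≤ flatDist μ ν :=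
  le_csSup (bddAbove_flatDistIn_set _ μ ν) ⟨φ, hφ, hφ_le, fun _ hx => absurd trivial hx, rfl⟩

lemma flatDist_nonneg : 0 ≤ flatDist μ ν := by
  simpa using integral_sub_integral_le_flatDist μ ν (LipschitzWith.const' (0 : ℝ)) (by simp)

lemma flatDist_comm : flatDist μ ν = flatDist ν μ := by
  have hle (ρ σ : Measure X) [IsFiniteMeasure ρ] [IsFiniteMeasure σ] :
      flatDist σ ρ ≤ flatDist ρ σ := by
    refine csSup_le ⟨_, 0, LipschitzWith.const' 0, by simp, by simp, rfl⟩ ?_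
    rintro r ⟨φ, hφ, hφ_le, -, rfl⟩
    have := integral_sub_integral_le_flatDist ρ σ (φ := fun x => -φ x) hφ.neg
      (by simpa using hφ_le)
    rw [integral_neg, integral_neg] at this
    linarith
  exact le_antisymm (hle ν μ) (hle μ ν)

variable [OpensMeasurableSpace X]

lemma measure_le_measure_thickening_add_flatDist_div {s : Set X} (hs : MeasurableSet s)
    {c : ℝ} (hc₀ : 0 < c) (hc₁ : c ≤ 1) :
    μ s ≤ ν (thickening c s) + ENNReal.ofReal (flatDist μ ν / c) := by
  rcases s.eq_empty_or_nonempty with rfl | hne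
  · simp
  set T := thickening c s
  have hlip : LipschitzWith 1 (plateau s c) := lipschitzWith_plateau s c
  have hbdd : ∀ y, |plateau s c y| ≤ 1 := fun y =>
    abs_le.2 ⟨by linarith [plateau_nonneg s c y], (plateau_le hc₀.le s y).trans hc₁⟩
  have hint (ρ : Measure X) [IsFiniteMeasure ρ] : Integrable (plateau s c) ρ :=
    .of_bound hlip.continuous.aestronglyMeasurable 1 (.of_forall hbdd)
  have hT : MeasurableSet T := isOpen_thickening.measurableSet
  have lower : c * μ.real s ≤ ∫ y, plateau s c y ∂μ := by
    calc c * μ.real s = ∫ y, s.indicator (fun _ => c) y ∂μ := by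
          rw [integral_indicator_const _ hs, smul_eq_mul, mul_comm]
      _ ≤ ∫ y, plateau s c y ∂μ := by
          refine integral_mono ((integrable_const c).indicator hs) (hint μ) fun y => ?_
          by_cases hy : y ∈ s
          · rw [Set.indicator_of_mem hy, plateau_eq_of_mem hc₀.le hy]
          · rw [Set.indicator_of_notMem hy]; exact plateau_nonneg s c y
  have upper : ∫ y, plateau s c y ∂ν ≤ c * ν.real T := by
    calc ∫ y, plateau s c y ∂ν ≤ ∫ y, T.indicator (fun _ => c) y ∂ν := by
          refine integral_mono (hint ν) ((integrable_const c).indicator hT) fun y => ?_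
          by_cases hy : y ∈ T
          · rw [Set.indicator_of_mem hy]; exact plateau_le hc₀.le s y
          · rw [Set.indicator_of_notMem hy, plateau_eq_zero_of_notMem_thickening hne hy]
      _ = c * ν.real T := by rw [integral_indicator_const _ hT, smul_eq_mul, mul_comm]
  have hreal : μ.real s ≤ ν.real T + flatDist μ ν / c := by
    rw [← mul_le_mul_iff_right₀ hc₀, mul_add, mul_div_cancel₀ _ hc₀.ne']
    linarith [integral_sub_integral_le_flatDist μ ν hlip hbdd]
  rw [← ofReal_measureReal (measure_ne_top μ s), ← ofReal_measureReal (measure_ne_top ν T),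
    ← ENNReal.ofReal_add measureReal_nonneg (div_nonneg (flatDist_nonneg μ ν) hc₀.le)]
  exact ENNReal.ofReal_le_ofReal hreal

end FlatDist

section EtaDist

variable {X : Type*} [MeasurableSpace X] [PseudoMetricSpace X]

lemma etaDist_nonneg (d : ℕ) (μ ν : Measure X) : 0 ≤ etaDist d μ ν :=
  Real.sInf_nonneg fun _ hδ => hδ.1.le

variable [OpensMeasurableSpace X] (d : ℕ) (μ ν : Measure X) [IsFiniteMeasure μ]
  [IsFiniteMeasure ν]

lemma measure_le_measure_thickening_add_pow {s : Set X} (hs : MeasurableSet s) {δ : ℝ}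
    (hδ : 0 < δ) (hΔ : flatDist μ ν ≤ min δ 1 * δ ^ d) :
    μ s ≤ ν (thickening δ s) + ENNReal.ofReal (δ ^ d) := by
  have hc : 0 < min δ 1 := lt_min hδ one_pos
  refine (measure_le_measure_thickening_add_flatDist_div μ ν hs hc (min_le_right _ _)).trans ?_
  gcongr
  · exact min_le_left _ _
  · rwa [div_le_iff₀' hc]

lemma etaDist_le_of_flatDist_le {δ : ℝ} (hδ : 0 ≤ δ) (hΔ : flatDist μ ν ≤ min δ 1 * δ ^ d) :
    etaDist d μ ν ≤ δ := by
  -- `etaDist` is an infimum over `δ' > 0` only, so `δ = 0` is reached from above.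
  refine le_of_forall_gt_imp_ge_of_dense fun δ' hδ' => ?_
  have hδ'₀ : 0 < δ' := hδ.trans_lt hδ'
  have hΔ' : flatDist μ ν ≤ min δ' 1 * δ' ^ d := hΔ.trans (by gcongr)
  refine csInf_le ⟨0, fun _ h => h.1.le⟩ ⟨hδ'₀, fun x r => ⟨?_, ?_⟩⟩
  · exact measure_le_measure_thickening_add_pow d μ ν measurableSet_closedBall hδ'₀ hΔ'
  · exact measure_le_measure_thickening_add_pow d ν μ measurableSet_closedBall hδ'₀
      (flatDist_comm ν μ ▸ hΔ')

lemma etaDist_le_flatDist_rpow_of_le_one (h : flatDist μ ν ≤ 1) :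
    etaDist d μ ν ≤ flatDist μ ν ^ ((1 : ℝ) / (d + 1)) := by
  have hΔ := flatDist_nonneg μ ν
  have hexp : (1 : ℝ) / (d + 1) = ((d + 1 : ℕ) : ℝ)⁻¹ := by push_cast; rw [one_div]
  refine etaDist_le_of_flatDist_le d μ ν (by positivity) (le_of_eq ?_)
  rw [min_eq_left (Real.rpow_le_one hΔ h (by positivity)), ← pow_succ', hexp,
    Real.rpow_inv_natCast_pow hΔ d.succ_ne_zero]

lemma etaDist_le_flatDist_rpow_of_one_le (hd : 1 ≤ d) (h : 1 ≤ flatDist μ ν) :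
    etaDist d μ ν ≤ flatDist μ ν ^ ((1 : ℝ) / d) := by
  have hΔ := flatDist_nonneg μ ν
  refine etaDist_le_of_flatDist_le d μ ν (by positivity) (le_of_eq ?_)
  rw [min_eq_right (Real.one_le_rpow h (by positivity)), one_mul, one_div,
    Real.rpow_inv_natCast_pow hΔ (by omega)]

lemma tendsto_etaDist_of_tendsto_flatDist (μi : ℕ → Measure X) [∀ i, IsFiniteMeasure (μi i)]
    (h : Tendsto (fun i => flatDist (μi i) μ) atTop (nhds 0)) :
    Tendsto (fun i => etaDist d (μi i) μ) atTop (nhds 0) := by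
  have hpos : (0 : ℝ) < 1 / (d + 1) := by positivity
  have hbound : ∀ᶠ i in atTop, etaDist d (μi i) μ ≤ flatDist (μi i) μ ^ ((1 : ℝ) / (d + 1)) :=
    (h.eventually (eventually_le_nhds one_pos)).mono fun i hi =>
      etaDist_le_flatDist_rpow_of_le_one d (μi i) μ hi
  have hlim : Tendsto (fun i => flatDist (μi i) μ ^ ((1 : ℝ) / (d + 1))) atTop (nhds 0) := by
    have := (Real.continuousAt_rpow_const 0 _ (Or.inr hpos.le)).tendsto.comp h
    rwa [Real.zero_rpow hpos.ne'] at this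
  exact squeeze_zero' (.of_forall fun i => etaDist_nonneg d (μi i) μ) hbound hlim

end EtaDist

theorem stmt6 {n : ℕ} (d : ℕ) (hd : 1 ≤ d)
    (μ ν : Measure (EuclideanSpace ℝ (Fin n)))
    [IsFiniteMeasure μ] [IsFiniteMeasure ν] :
    ((flatDist μ ν ≤ 1 → etaDist d μ ν ≤ flatDist μ ν ^ ((1 : ℝ) / (d + 1))) ∧
      (1 ≤ flatDist μ ν → etaDist d μ ν ≤ flatDist μ ν ^ ((1 : ℝ) / d))) ∧
    ∀ μi : ℕ → Measure (EuclideanSpace ℝ (Fin n)), (∀ i, IsFiniteMeasure (μi i)) →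
      Tendsto (fun i => flatDist (μi i) μ) atTop (nhds 0) →
      Tendsto (fun i => etaDist d (μi i) μ) atTop (nhds 0) :=
  ⟨⟨etaDist_le_flatDist_rpow_of_le_one d μ ν, etaDist_le_flatDist_rpow_of_one_le d μ ν hd⟩,
    fun μi _ => tendsto_etaDist_of_tendsto_flatDist d μ μi⟩

end
end

section
/- For every positive integer d, the modified Prokhorov distance η_d satisfies the triangle inequality on finite Borel measures on ℝⁿ: for all finite Borel measures μ, ν, λ on ℝⁿ, η_d(μ,λ) ≤ η_d(μ,ν) + η_d(ν,λ). -/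
open MeasureTheory

noncomputable section

/-- The defining set of `etaDist` is nonempty for finite measures. -/
lemma etaSet_nonempty {X : Type*} [MeasurableSpace X] [PseudoMetricSpace X]
    (d : ℕ) (hd : 1 ≤ d) (μ ν : Measure X) [IsFiniteMeasure μ] [IsFiniteMeasure ν] :
    Set.Nonempty {δ : ℝ | 0 < δ ∧ ∀ (x : X) (r : ℝ),
    μ (Metric.closedBall x r) ≤
        ν (Metric.thickening δ (Metric.closedBall x r)) + ENNReal.ofReal (δ ^ d) ∧
    ν (Metric.closedBall x r) ≤
        μ (Metric.thickening δ (Metric.closedBall x r)) + ENNReal.ofReal (δ ^ d)} := by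
  set δ : ℝ := max 1 (max (μ Set.univ).toReal (ν Set.univ).toReal) + 1 with hδdef
  have hδ1 : 1 ≤ δ := le_add_of_le_of_nonneg (le_max_left _ _) zero_le_one
  have hμδ : (μ Set.univ) ≤ ENNReal.ofReal δ := by
    calc μ Set.univ ≤ ENNReal.ofReal (μ Set.univ).toReal := by
          rw [ENNReal.ofReal_toReal (measure_ne_top _ _)]
      _ ≤ ENNReal.ofReal δ := by
          apply ENNReal.ofReal_le_ofReal
          calc (μ Set.univ).toReal ≤ max (μ Set.univ).toReal (ν Set.univ).toReal :=
                le_max_left _ _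
            _ ≤ δ := le_add_of_le_of_nonneg (le_max_right _ _) zero_le_one
  have hνδ : (ν Set.univ) ≤ ENNReal.ofReal δ := by
    calc ν Set.univ ≤ ENNReal.ofReal (ν Set.univ).toReal := by
          rw [ENNReal.ofReal_toReal (measure_ne_top _ _)]
      _ ≤ ENNReal.ofReal δ := by
          apply ENNReal.ofReal_le_ofReal
          calc (ν Set.univ).toReal ≤ max (μ Set.univ).toReal (ν Set.univ).toReal :=
                le_max_right _ _
            _ ≤ δ := le_add_of_le_of_nonneg (le_max_right _ _) zero_le_one
  have hpow : ENNReal.ofReal δ ≤ ENNReal.ofReal (δ ^ d) :=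
    ENNReal.ofReal_le_ofReal (le_self_pow₀ hδ1 (by omega))
  refine ⟨δ, lt_of_lt_of_le zero_lt_one hδ1, fun x r => ?_⟩
  constructor
  · calc μ (Metric.closedBall x r) ≤ μ Set.univ := measure_mono (Set.subset_univ _)
      _ ≤ ENNReal.ofReal (δ ^ d) := hμδ.trans hpow
      _ ≤ _ := le_add_self
  · calc ν (Metric.closedBall x r) ≤ ν Set.univ := measure_mono (Set.subset_univ _)
      _ ≤ ENNReal.ofReal (δ ^ d) := hνδ.trans hpow
      _ ≤ _ := le_add_self

theorem stmt7 {n : ℕ} (d : ℕ) (hd : 1 ≤ d)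
    (μ ν lam : Measure (EuclideanSpace ℝ (Fin n)))
    [IsFiniteMeasure μ] [IsFiniteMeasure ν] [IsFiniteMeasure lam] :
    etaDist d μ lam ≤ etaDist d μ ν + etaDist d ν lam := by
  set X := EuclideanSpace ℝ (Fin n)
  set S : Measure X → Measure X → Set ℝ := fun μ ν =>
    {δ : ℝ | 0 < δ ∧ ∀ (x : X) (r : ℝ),
    μ (Metric.closedBall x r) ≤
        ν (Metric.thickening δ (Metric.closedBall x r)) + ENNReal.ofReal (δ ^ d) ∧
    ν (Metric.closedBall x r) ≤
        μ (Metric.thickening δ (Metric.closedBall x r)) + ENNReal.ofReal (δ ^ d)} with hS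
  have hbdd : ∀ μ ν : Measure X, BddBelow (S μ ν) := fun μ ν =>
    ⟨0, fun δ hδ => hδ.1.le⟩
  -- key step: the sum of admissible δ's is admissible
  have key : ∀ δ₁ ∈ S μ ν, ∀ δ₂ ∈ S ν lam, δ₁ + δ₂ ∈ S μ lam := by
    rintro δ₁ ⟨hδ₁, h₁⟩ δ₂ ⟨hδ₂, h₂⟩
    have hpow : ENNReal.ofReal (δ₁ ^ d) + ENNReal.ofReal (δ₂ ^ d)
        ≤ ENNReal.ofReal ((δ₁ + δ₂) ^ d) := by
      rw [← ENNReal.ofReal_add (by positivity) (by positivity)]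
      exact ENNReal.ofReal_le_ofReal (pow_add_pow_le hδ₁.le hδ₂.le (by omega))
    refine ⟨by linarith, fun x r => ?_⟩
    rcases le_or_gt 0 r with hr | hr
    · have hthick1 : Metric.thickening δ₁ (Metric.closedBall x r) = Metric.ball x (δ₁ + r) :=
        thickening_closedBall hδ₁ hr x
      have hthick2 : Metric.thickening δ₂ (Metric.closedBall x r) = Metric.ball x (δ₂ + r) :=
        thickening_closedBall hδ₂ hr x
      have hthick12 : Metric.thickening (δ₁ + δ₂) (Metric.closedBall x r)
          = Metric.ball x (δ₁ + δ₂ + r) :=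
        thickening_closedBall (by linarith) hr x
      have hmid1 : Metric.thickening δ₂ (Metric.closedBall x (δ₁ + r))
          = Metric.ball x (δ₁ + δ₂ + r) := by
        rw [thickening_closedBall hδ₂ (by linarith) x]; ring_nf
      have hmid2 : Metric.thickening δ₁ (Metric.closedBall x (δ₂ + r))
          = Metric.ball x (δ₁ + δ₂ + r) := by
        rw [thickening_closedBall hδ₁ (by linarith) x]; ring_nf
      constructor
      · calc μ (Metric.closedBall x r)
            ≤ ν (Metric.thickening δ₁ (Metric.closedBall x r)) + ENNReal.ofReal (δ₁ ^ d) :=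
              (h₁ x r).1
          _ ≤ ν (Metric.closedBall x (δ₁ + r)) + ENNReal.ofReal (δ₁ ^ d) := by
              gcongr
              rw [hthick1]; exact Metric.ball_subset_closedBall
          _ ≤ (lam (Metric.thickening δ₂ (Metric.closedBall x (δ₁ + r)))
                + ENNReal.ofReal (δ₂ ^ d)) + ENNReal.ofReal (δ₁ ^ d) := by
              gcongr; exact (h₂ x (δ₁ + r)).1
          _ = lam (Metric.ball x (δ₁ + δ₂ + r))
                + (ENNReal.ofReal (δ₁ ^ d) + ENNReal.ofReal (δ₂ ^ d)) := by
              rw [hmid1]; ring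
          _ ≤ lam (Metric.thickening (δ₁ + δ₂) (Metric.closedBall x r))
                + ENNReal.ofReal ((δ₁ + δ₂) ^ d) := by
              rw [hthick12]; gcongr
      · calc lam (Metric.closedBall x r)
            ≤ ν (Metric.thickening δ₂ (Metric.closedBall x r)) + ENNReal.ofReal (δ₂ ^ d) :=
              (h₂ x r).2
          _ ≤ ν (Metric.closedBall x (δ₂ + r)) + ENNReal.ofReal (δ₂ ^ d) := by
              gcongr
              rw [hthick2]; exact Metric.ball_subset_closedBall
          _ ≤ (μ (Metric.thickening δ₁ (Metric.closedBall x (δ₂ + r)))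
                + ENNReal.ofReal (δ₁ ^ d)) + ENNReal.ofReal (δ₂ ^ d) := by
              gcongr; exact (h₁ x (δ₂ + r)).2
          _ = μ (Metric.ball x (δ₁ + δ₂ + r))
                + (ENNReal.ofReal (δ₁ ^ d) + ENNReal.ofReal (δ₂ ^ d)) := by
              rw [hmid2]; ring
          _ ≤ μ (Metric.thickening (δ₁ + δ₂) (Metric.closedBall x r))
                + ENNReal.ofReal ((δ₁ + δ₂) ^ d) := by
              rw [hthick12]; gcongr
    · have : Metric.closedBall x r = ∅ := Metric.closedBall_eq_empty.mpr hr
      simp [this]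
  have hne₁ : (S μ ν).Nonempty := etaSet_nonempty d hd μ ν
  have hne₂ : (S ν lam).Nonempty := etaSet_nonempty d hd ν lam
  have main : ∀ δ₁ ∈ S μ ν, ∀ δ₂ ∈ S ν lam, etaDist d μ lam ≤ δ₁ + δ₂ := fun δ₁ h₁ δ₂ h₂ =>
    csInf_le (hbdd μ lam) (key δ₁ h₁ δ₂ h₂)
  have h1 : etaDist d μ lam - etaDist d ν lam ≤ etaDist d μ ν := by
    apply le_csInf hne₁
    intro δ₁ h₁
    rw [sub_le_iff_le_add, add_comm]
    have : etaDist d μ lam - δ₁ ≤ etaDist d ν lam := by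
      apply le_csInf hne₂
      intro δ₂ h₂
      rw [sub_le_iff_le_add, add_comm]
      exact main δ₁ h₁ δ₂ h₂
    linarith
  linarith

end
end

section
/- Let ξ : ℝ → ℝ be a Lipschitz function with Lipschitz constant Lip(ξ) that vanishes outside (−1,1). Let μ, ν be finite Borel measures on ℝⁿ, x, z ∈ ℝⁿ, ε ∈ (0,1], and let B = B(x, ε + |x−z|) be the open ball of radius ε + |x−z| centered at x. Then |∫ ξ(|y−z|/ε) dμ(y) − ∫ ξ(|y−x|/ε) dν(y)| ≤ (Lip(ξ)/ε) · (Δ_B(μ,ν) + |x−z| · ν(B)). -/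
/-!
Write `f_w y = ξ (dist y w / ε)`. The difference splits as
`(∫ f_z ∂μ - ∫ f_z ∂ν) + ∫ (f_z - f_x) ∂ν`. The function `f_z` is `(L / ε)`-Lipschitz, bounded by
`L ≤ L / ε` and supported in `B`, so `(L / ε)⁻¹ f_z` is a test function for `Δ_B(μ, ν)`; and
`|f_z - f_x| ≤ (L / ε) |x - z|` on `B`, while both vanish outside `B`.
-/

open MeasureTheory

noncomputable section

open NNReal

section Profile

variable {ξ : ℝ → ℝ} {L : ℝ≥0}

theorem abs_le_of_lipschitzWith_of_eq_zero_of_notMem_Ioo (hξ : LipschitzWith L ξ)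
    (hsupp : ∀ s, s ∉ Set.Ioo (-1 : ℝ) 1 → ξ s = 0) (s : ℝ) : |ξ s| ≤ L := by
  by_cases hs : s ∈ Set.Ioo (-1 : ℝ) 1
  · have hdist (t : ℝ) (ht : t ∉ Set.Ioo (-1 : ℝ) 1) : |ξ s| ≤ L * |s - t| := by
      simpa [hsupp t ht, Real.dist_eq] using hξ.dist_le_mul s t
    have h₁ := hdist 1 (by simp)
    have h₂ := hdist (-1) (by simp)
    rw [abs_sub_comm, abs_of_pos (show (0 : ℝ) < 1 - s by linarith [hs.2])] at h₁
    rw [abs_of_pos (show (0 : ℝ) < s - -1 by linarith [hs.1])] at h₂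
    linarith
  · simp [hsupp s hs]

theorem lipschitzWith_comp_div (hξ : LipschitzWith L ξ) {ε : ℝ} (hε : 0 ≤ ε) :
    LipschitzWith (L / ε.toNNReal) fun s => ξ (s / ε) := by
  refine LipschitzWith.of_dist_le_mul fun a b => ?_
  calc dist (ξ (a / ε)) (ξ (b / ε)) ≤ L * dist (a / ε) (b / ε) := hξ.dist_le_mul _ _
    _ = L / ε * dist a b := by
      rw [Real.dist_eq, Real.dist_eq, div_sub_div_same, abs_div, abs_of_nonneg hε]
      ring
    _ = _ := by rw [NNReal.coe_div, Real.coe_toNNReal _ hε]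

theorem comp_dist_div_eq_zero_of_notMem_ball {X : Type*} [PseudoMetricSpace X]
    (hsupp : ∀ s, s ∉ Set.Ioo (-1 : ℝ) 1 → ξ s = 0) {ε r : ℝ} (hε : 0 < ε) {x w y : X}
    (hr : ε + dist x w ≤ r) (hy : y ∉ Metric.ball x r) : ξ (dist y w / ε) = 0 :=
  hsupp _ fun h => h.2.not_ge <| (one_le_div hε).2 <| by
    linarith [not_lt.1 (Metric.mem_ball.not.1 hy), dist_triangle y w x, dist_comm x w]

end Profile

theorem LipschitzWith.abs_comp_dist_sub_comp_dist_le {X : Type*} [PseudoMetricSpace X]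
    {g : ℝ → ℝ} {K : ℝ≥0} (hg : LipschitzWith K g) (y w w' : X) :
    |g (dist y w) - g (dist y w')| ≤ K * dist w w' := by
  calc |g (dist y w) - g (dist y w')| ≤ K * |dist w y - dist w' y| := by
        simpa [Real.dist_eq, dist_comm y] using hg.dist_le_mul (dist y w) (dist y w')
    _ ≤ K * dist w w' := by gcongr; exact abs_dist_sub_le w w' y

section FlatDistance

variable {X : Type*} [MeasurableSpace X] [PseudoMetricSpace X] {U : Set X} {μ ν : Measure X}
  [IsFiniteMeasure μ] [IsFiniteMeasure ν] {φ : X → ℝ}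

theorem integral_sub_integral_le_flatDistIn (h₁ : LipschitzWith 1 φ) (h₂ : ∀ x, |φ x| ≤ 1)
    (h₃ : ∀ x ∉ U, φ x = 0) : (∫ x, φ x ∂μ) - ∫ x, φ x ∂ν ≤ flatDistIn U μ ν := by
  refine le_csSup ⟨μ.real Set.univ + ν.real Set.univ, ?_⟩ ⟨φ, h₁, h₂, h₃, rfl⟩
  rintro r ⟨ψ, -, hψ, -, rfl⟩
  have hbound (κ : Measure X) [IsFiniteMeasure κ] : |∫ x, ψ x ∂κ| ≤ κ.real Set.univ := by
    have h := norm_integral_le_of_norm_le_const (μ := κ) (C := 1)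
      (ae_of_all _ fun x => by rw [Real.norm_eq_abs]; exact hψ x)
    rwa [one_mul, Real.norm_eq_abs] at h
  linarith [abs_le.1 (hbound μ), abs_le.1 (hbound ν)]

theorem abs_integral_sub_integral_le_flatDistIn (h₁ : LipschitzWith 1 φ)
    (h₂ : ∀ x, |φ x| ≤ 1) (h₃ : ∀ x ∉ U, φ x = 0) :
    |(∫ x, φ x ∂μ) - ∫ x, φ x ∂ν| ≤ flatDistIn U μ ν := by
  have hneg := integral_sub_integral_le_flatDistIn (μ := μ) (ν := ν) (φ := fun x => -φ x)
    h₁.neg (by simpa using h₂) (by simpa using h₃)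
  rw [integral_neg, integral_neg] at hneg
  exact abs_le.2 ⟨by linarith, integral_sub_integral_le_flatDistIn h₁ h₂ h₃⟩

theorem abs_integral_sub_integral_le_mul_flatDistIn {K : ℝ≥0} (hφ : LipschitzWith K φ)
    (hb : ∀ x, |φ x| ≤ K) (hU : ∀ x ∉ U, φ x = 0) :
    |(∫ x, φ x ∂μ) - ∫ x, φ x ∂ν| ≤ K * flatDistIn U μ ν := by
  rcases eq_zero_or_pos K with rfl | hK
  · have hφ0 (x : X) : φ x = 0 := abs_nonpos_iff.1 (by simpa using hb x)
    simp [hφ0]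
  have hK' : (0 : ℝ) < K := hK
  have h₁ : LipschitzWith 1 fun x => (K : ℝ)⁻¹ * φ x := by
    refine LipschitzWith.of_dist_le_mul fun a b => ?_
    rw [Real.dist_eq, ← mul_sub, abs_mul, abs_inv, abs_of_pos hK', NNReal.coe_one, one_mul,
      inv_mul_le_iff₀ hK', ← Real.dist_eq]
    exact hφ.dist_le_mul a b
  have h₂ (x : X) : |(K : ℝ)⁻¹ * φ x| ≤ 1 := by
    rw [abs_mul, abs_inv, abs_of_pos hK', inv_mul_le_iff₀ hK', mul_one]
    exact hb x
  have h := abs_integral_sub_integral_le_flatDistIn (U := U) (μ := μ) (ν := ν) h₁ h₂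
    (fun x hx => by simp [hU x hx])
  rw [integral_const_mul, integral_const_mul, ← mul_sub, abs_mul, abs_inv, abs_of_pos hK',
    inv_mul_le_iff₀ hK'] at h
  exact h

end FlatDistance

theorem abs_integral_sub_integral_le_mul_measureReal {X : Type*} [MeasurableSpace X]
    {ν : Measure X} [IsFiniteMeasure ν] {U : Set X} {f g : X → ℝ} (hf : Integrable f ν)
    (hg : Integrable g ν) {C : ℝ} (hC : ∀ x ∈ U, |f x - g x| ≤ C)
    (hU : ∀ x ∉ U, f x = g x) :
    |(∫ x, f x ∂ν) - ∫ x, g x ∂ν| ≤ C * ν.real U := by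
  rw [← integral_sub hf hg,
    ← setIntegral_eq_integral_of_forall_compl_eq_zero fun x hx => sub_eq_zero.2 (hU x hx)]
  exact norm_setIntegral_le_of_norm_le_const (C := C) (measure_lt_top ν U) fun x hx => by
    rw [Real.norm_eq_abs]; exact hC x hx

theorem Continuous.integrable_of_abs_le {X : Type*} [MeasurableSpace X] [TopologicalSpace X]
    [OpensMeasurableSpace X] {f : X → ℝ} (hf : Continuous f) {C : ℝ} (hb : ∀ x, |f x| ≤ C)
    (μ : Measure X) [IsFiniteMeasure μ] : Integrable f μ :=
  .of_bound hf.aestronglyMeasurable C (ae_of_all _ fun x => by rw [Real.norm_eq_abs]; exact hb x)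

theorem stmt9 {n : ℕ} (ξ : ℝ → ℝ) (L : NNReal) (hξ : LipschitzWith L ξ)
    (hξsupp : ∀ s, s ∉ Set.Ioo (-1 : ℝ) 1 → ξ s = 0)
    (μ ν : Measure (EuclideanSpace ℝ (Fin n))) [IsFiniteMeasure μ] [IsFiniteMeasure ν]
    (x z : EuclideanSpace ℝ (Fin n)) (ε : ℝ) (hε : ε ∈ Set.Ioc (0 : ℝ) 1) :
    |(∫ y, ξ (‖y - z‖ / ε) ∂μ) - ∫ y, ξ (‖y - x‖ / ε) ∂ν| ≤
      ((L : ℝ) / ε) *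
        (flatDistIn (Metric.ball x (ε + ‖x - z‖)) μ ν +
          ‖x - z‖ * (ν (Metric.ball x (ε + ‖x - z‖))).toReal) := by
  obtain ⟨hε₀, hε₁⟩ := hε
  simp_rw [← dist_eq_norm]
  set B := Metric.ball x (ε + dist x z)
  set g : ℝ → ℝ := fun s => ξ (s / ε)
  have hg : LipschitzWith (L / ε.toNNReal) g := lipschitzWith_comp_div hξ hε₀.le
  have hK : ((L / ε.toNNReal : ℝ≥0) : ℝ) = L / ε := by
    rw [NNReal.coe_div, Real.coe_toNNReal _ hε₀.le]
  have hgz : ∀ y ∉ B, g (dist y z) = 0 := fun y hy =>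
    comp_dist_div_eq_zero_of_notMem_ball hξsupp hε₀ le_rfl hy
  have hgx : ∀ y ∉ B, g (dist y x) = 0 := fun y hy =>
    comp_dist_div_eq_zero_of_notMem_ball hξsupp hε₀ (by simp) hy
  have hgb (s : ℝ) : |g s| ≤ L / ε :=
    (abs_le_of_lipschitzWith_of_eq_zero_of_notMem_Ioo hξ hξsupp _).trans
      (le_div_self L.coe_nonneg hε₀ hε₁)
  have hcont (w : EuclideanSpace ℝ (Fin n)) : Continuous fun y => g (dist y w) :=
    hg.continuous.comp (continuous_id.dist continuous_const)
  have hflat : |(∫ y, g (dist y z) ∂μ) - ∫ y, g (dist y z) ∂ν| ≤ L / ε * flatDistIn B μ ν := by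
    simpa [hK] using abs_integral_sub_integral_le_mul_flatDistIn
      (hg.comp (LipschitzWith.dist_left z)) (by simpa [hK] using fun y => hgb (dist y z)) hgz
  have hshift : |(∫ y, g (dist y z) ∂ν) - ∫ y, g (dist y x) ∂ν| ≤
      L / ε * dist x z * ν.real B :=
    abs_integral_sub_integral_le_mul_measureReal
      ((hcont z).integrable_of_abs_le (fun y => hgb _) ν)
      ((hcont x).integrable_of_abs_le (fun y => hgb _) ν)
      (fun y _ => by simpa [hK, dist_comm z x] using hg.abs_comp_dist_sub_comp_dist_le y z x)
      (fun y hy => by rw [hgz y hy, hgx y hy])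
  calc _ ≤ _ := abs_sub_le _ (∫ y, g (dist y z) ∂ν) _
    _ ≤ L / ε * flatDistIn B μ ν + L / ε * dist x z * ν.real B := add_le_add hflat hshift
    _ = _ := by rw [measureReal_def]; ring
end
end

section
/- (Planar barrier for the time-continuous point cloud flow.) Let N ≥ 1, T ∈ (0,∞], ε > 0. For i, j ∈ {1,…,N} let x_i : [0,T) → ℝⁿ be differentiable, ω_{ij} : [0,T) → [0,∞), and Π_{ij}(t) : ℝⁿ → ℝⁿ linear maps, and suppose that for all t ∈ [0,T) and all i, x_i′(t) = (1/ε) Σ_{j=1}^{N} ω_{ij}(t) Π_{ij}(t)(x_j(t) − x_i(t)). Let ν ∈ ℝⁿ and μ ∈ ℝ with x_i(0)·ν ≤ μ for all i. Assume that for every t ∈ [0,T), every index i with x_i(t)·ν = max_k x_k(t)·ν, and every j, one has ⟨Π_{ij}(t)(x_j(t) − x_i(t)), ν⟩ ≤ 0. Then x_i(t)·ν ≤ μ for all t ∈ [0,T) and all i, i.e. the half-space {x : x·ν ≤ μ} is a barrier for the flow, independently of the choice of the weights. -/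
open scoped RealInnerProductSpace ENNReal

theorem stmt13 {n N : ℕ} (hN : 1 ≤ N) (T : ℝ≥0∞) (hT : 0 < T) (ε : ℝ) (hε : 0 < ε)
    (S : Set ℝ) (hS : S = {t : ℝ | 0 ≤ t ∧ ENNReal.ofReal t < T})
    (x : Fin N → ℝ → EuclideanSpace ℝ (Fin n))
    (ω : Fin N → Fin N → ℝ → ℝ) (hω : ∀ i j, ∀ t ∈ S, 0 ≤ ω i j t)
    (P : Fin N → Fin N → ℝ →
      (EuclideanSpace ℝ (Fin n) →L[ℝ] EuclideanSpace ℝ (Fin n)))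
    (hode : ∀ i, ∀ t ∈ S, HasDerivWithinAt (x i)
      ((1 / ε) • ∑ j, ω i j t • (P i j t) (x j t - x i t)) S t)
    (ν : EuclideanSpace ℝ (Fin n)) (μ : ℝ)
    (hinit : ∀ i, ⟪x i 0, ν⟫ ≤ μ)
    (hbar : ∀ t ∈ S, ∀ i, (∀ k, ⟪x k t, ν⟫ ≤ ⟪x i t, ν⟫) →
      ∀ j, ⟪(P i j t) (x j t - x i t), ν⟫ ≤ 0) :
    ∀ t ∈ S, ∀ i, ⟪x i t, ν⟫ ≤ μ := by
  intro t0 ht0 i0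
  haveI : Nonempty (Fin N) := Fin.pos_iff_nonempty.mp hN
  have ht0' : 0 ≤ t0 ∧ ENNReal.ofReal t0 < T := by rwa [hS] at ht0
  set g : Fin N → ℝ → ℝ := fun i t => ⟪x i t, ν⟫ with hg_def
  have hsub : Set.Icc (0:ℝ) t0 ⊆ S := by
    rw [hS]; rintro z ⟨hz0, hz1⟩
    exact ⟨hz0, lt_of_le_of_lt (ENNReal.ofReal_le_ofReal hz1) ht0'.2⟩
  have hg : ∀ i, ∀ t ∈ S, HasDerivWithinAt (g i)
      ⟪(1 / ε) • ∑ j, ω i j t • (P i j t) (x j t - x i t), ν⟫ S t := by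
    intro i t ht
    have := (hode i t ht).inner ℝ (hasDerivWithinAt_const t S ν)
    simpa using this
  set F : ℝ → ℝ := fun t => Finset.univ.sup' Finset.univ_nonempty (fun i => g i t)
    with hF_def
  have hcont : ∀ i, ContinuousOn (g i) (Set.Icc 0 t0) :=
    fun i z hz => ((hg i z (hsub hz)).continuousWithinAt).mono hsub
  have hFcont : ContinuousOn F (Set.Icc 0 t0) := by
    intro z hz
    exact Filter.Tendsto.finset_sup'_nhds_apply _ (fun i _ => hcont i z hz)
  have key : ∀ z ∈ Set.Ico (0:ℝ) t0, ∀ r, (0:ℝ) < r →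
      ∃ᶠ w in nhdsWithin z (Set.Ioi z), slope F z w < r := by
    intro z hz r hr
    have hzS : z ∈ S := hsub ⟨hz.1, hz.2.le⟩
    have hIoc : Set.Ioc z t0 ⊆ S := fun w hw => hsub ⟨le_trans hz.1 hw.1.le, hw.2⟩
    have hle : nhdsWithin z (Set.Ioi z) ≤ nhdsWithin z S := by
      rw [← nhdsWithin_Ioc_eq_nhdsGT hz.2]
      exact nhdsWithin_mono z hIoc
    have hle' : nhdsWithin z (Set.Ioi z) ≤ nhdsWithin z (S \ {z}) := by
      rw [← nhdsWithin_Ioc_eq_nhdsGT hz.2]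
      exact nhdsWithin_mono z (fun w hw => ⟨hIoc hw, ne_of_gt hw.1⟩)
    have hpos : ∀ᶠ w in nhdsWithin z (Set.Ioi z), z < w :=
      eventually_mem_nhdsWithin
    have h1 : ∀ i, ∀ᶠ w in nhdsWithin z (Set.Ioi z), g i w < F z + r * (w - z) := by
      intro i
      rcases lt_or_eq_of_le (Finset.le_sup' (fun k => g k z) (Finset.mem_univ i))
        with hlt | heq
      · -- non-maximizer: continuity
        have hc : Filter.Tendsto (g i) (nhdsWithin z (Set.Ioi z)) (nhds (g i z)) :=
          ((hg i z hzS).continuousWithinAt).mono_left hle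
        have h2 : ∀ᶠ w in nhdsWithin z (Set.Ioi z), g i w < F z :=
          hc.eventually_lt_const hlt
        filter_upwards [h2, hpos] with w hw hwz
        have : 0 < r * (w - z) := mul_pos hr (by linarith)
        linarith
      · -- maximizer
        have hmax : ∀ k, ⟪x k z, ν⟫ ≤ ⟪x i z, ν⟫ := by
          intro k
          rw [show (⟪x i z, ν⟫ : ℝ) = g i z from rfl, heq]
          exact Finset.le_sup' (fun k => g k z) (Finset.mem_univ k)
        have hd : ⟪(1 / ε) • ∑ j, ω i j z • (P i j z) (x j z - x i z), ν⟫ ≤ (0:ℝ) := by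
          rw [real_inner_smul_left, sum_inner]
          apply mul_nonpos_of_nonneg_of_nonpos
          · positivity
          · apply Finset.sum_nonpos
            intro j _
            rw [real_inner_smul_left]
            exact mul_nonpos_of_nonneg_of_nonpos (hω i j z hzS)
              (hbar z hzS i hmax j)
        have hslope : Filter.Tendsto (slope (g i) z) (nhdsWithin z (Set.Ioi z))
            (nhds ⟪(1 / ε) • ∑ j, ω i j z • (P i j z) (x j z - x i z), ν⟫) :=
          ((hasDerivWithinAt_iff_tendsto_slope.mp (hg i z hzS))).mono_left hle'
        have h2 : ∀ᶠ w in nhdsWithin z (Set.Ioi z), slope (g i) z w < r :=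
          hslope.eventually_lt_const (lt_of_le_of_lt hd hr)
        filter_upwards [h2, hpos] with w hw hwz
        have hwz' : (0:ℝ) < w - z := by linarith
        rw [slope_def_field, div_lt_iff₀ hwz'] at hw
        have : g i z ≤ F z := Finset.le_sup' (fun k => g k z) (Finset.mem_univ i)
        -- slope_def_field : slope f a b = (f b - f a) / (b - a)
        nlinarith [hw]
    have hall : ∀ᶠ w in nhdsWithin z (Set.Ioi z),
        ∀ i, g i w < F z + r * (w - z) := by
      rw [Filter.eventually_all]
      exact h1
    have hev : ∀ᶠ w in nhdsWithin z (Set.Ioi z), slope F z w < r := by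
      filter_upwards [hall, hpos] with w hw hwz
      have hwz' : (0:ℝ) < w - z := by linarith
      have hFw : F w < F z + r * (w - z) :=
        (Finset.sup'_lt_iff _).mpr fun i _ => hw i
      rw [slope_def_field, div_lt_iff₀ hwz']
      nlinarith [hFw]
    exact hev.frequently
  have hF0 : F 0 ≤ μ := Finset.sup'_le _ _ fun i _ => hinit i
  have main : ∀ z ∈ Set.Icc (0:ℝ) t0, F z ≤ μ := by
    intro z hz
    exact image_le_of_liminf_slope_right_le_deriv_boundary hFcont hF0
      continuousOn_const
      (fun w _ => hasDerivWithinAt_const w _ μ)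
      (fun w hw r hr => key w hw r hr) hz
  have := main t0 ⟨ht0'.1, le_refl t0⟩
  exact le_trans (Finset.le_sup' (fun k => g k t0) (Finset.mem_univ i0)) this
end

section
/- (Sphere comparison principle for the time-continuous point cloud flow.) Let 1 ≤ d ≤ n be integers, N ≥ 1, T ∈ (0,∞], ε > 0. Let x_i : [0,T) → ℝⁿ be differentiable, m_i : [0,T) → (0,∞), and Π_{ij}(t) : ℝⁿ → ℝⁿ linear maps. Assume for all t and i that Σ_{l=1}^{N} m_l(t) ξ(|x_l(t)−x_i(t)|/ε) > 0 and that x_i′(t) = (1/ε) Σ_{j≠i} ω_{ij}(t) Π_{ij}(t)(x_j(t) − x_i(t)), where ω_{ij}(t) = −(d/n) · m_j(t) ρ′(|x_j(t)−x_i(t)|/ε) / (|x_j(t)−x_i(t)| · Σ_{l} m_l(t) ξ(|x_l(t)−x_i(t)|/ε)) when x_j(t) ≠ x_i(t), and ω_{ij}(t) = 0 when x_j(t) = x_i(t). Fix z ∈ ℝⁿ, set R(t) = max_i |x_i(t) − z| and c(t) = min{ ⟨Π_{ij}(t)(x_i(t)−x_j(t)), x_i(t)−z⟩ / |x_i(t)−x_j(t)|²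 : i with |x_i(t)−z| = R(t) and j with 0 < |x_i(t)−x_j(t)| < ε }; assume this minimum is over a nonempty set for every t and that c is continuous on [0,T). Then R(t)² ≤ R(0)² − 2d ∫₀ᵗ c(s) ds for all t ∈ [0,T). -/
open scoped RealInnerProductSpace ENNReal
open Filter Set Topology

lemma aux_zero_of_ge_one {φ : ℝ → ℝ} (hcont : Continuous φ)
    (hsupp : ∀ s, s ∉ Set.Icc (-1:ℝ) 1 → φ s = 0) : ∀ u : ℝ, 1 ≤ u → φ u = 0 := by
  have h1 : φ 1 = 0 := by
    have h0 : ∀ᶠ s in 𝓝[>] (1:ℝ), φ s = 0 :=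
      eventually_mem_nhdsWithin.mono fun s hs =>
        hsupp s (by simp only [Set.mem_Icc, not_and_or, not_le]; right; exact hs)
    have hc : Tendsto φ (𝓝[>] (1:ℝ)) (𝓝 (φ 1)) :=
      (hcont.tendsto 1).mono_left nhdsWithin_le_nhds
    exact tendsto_nhds_unique (hc.congr' h0) tendsto_const_nhds
  intro u hu
  rcases eq_or_lt_of_le hu with h | h
  · rw [← h]; exact h1
  · exact hsupp u (by simp only [Set.mem_Icc, not_and_or, not_le]; right; exact h)

lemma aux_freq_slope {N : ℕ} (g : Fin N → ℝ → ℝ) (f : ℝ → ℝ) (x₀ : ℝ) (r : ℝ)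
    (hmax : ∀ z, ∃ i, f z = g i z)
    (hcf : Tendsto f (𝓝[>] x₀) (𝓝 (f x₀)))
    (hcg : ∀ i, Tendsto (g i) (𝓝[>] x₀) (𝓝 (g i x₀)))
    (hslope : ∀ i, f x₀ = g i x₀ → ∀ᶠ z in 𝓝[>] x₀, slope (g i) x₀ z < r) :
    ∃ᶠ z in 𝓝[>] x₀, slope f x₀ z < r := by
  obtain ⟨i, hfreq⟩ : ∃ i, ∃ᶠ z in 𝓝[>] x₀, f z = g i z := by
    by_contra h
    push_neg at h
    obtain ⟨zz, hz1⟩ := (Filter.eventually_all.2 h).exists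
    obtain ⟨i, hi⟩ := hmax zz
    exact hz1 i hi
  have hl : (𝓝[>] x₀ ⊓ Filter.principal {z | f z = g i z}).NeBot :=
    Filter.frequently_iff_neBot.mp hfreq
  have key : f x₀ = g i x₀ := by
    have h1 : Tendsto f (𝓝[>] x₀ ⊓ Filter.principal {z | f z = g i z}) (𝓝 (f x₀)) :=
      hcf.mono_left inf_le_left
    have h2 : Tendsto (g i) (𝓝[>] x₀ ⊓ Filter.principal {z | f z = g i z}) (𝓝 (g i x₀)) :=
      (hcg i).mono_left inf_le_left
    have h3 : f =ᶠ[𝓝[>] x₀ ⊓ Filter.principal {z | f z = g i z}] g i :=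
      (Filter.eventually_principal.2 fun z hz => hz).filter_mono inf_le_right
    exact tendsto_nhds_unique (h1.congr' h3) h2
  refine (hfreq.and_eventually (hslope i key)).mono ?_
  rintro zz ⟨h1, h2⟩
  simpa only [slope_def_field, h1, key] using h2

open Classical in

theorem stmt14 {n d N : ℕ} (hd : 1 ≤ d) (hdn : d ≤ n) (hN : 1 ≤ N)
    (ρ ξ : ℝ → ℝ)
    (hρsm : ContDiff ℝ (⊤ : ℕ∞) ρ) (hξsm : ContDiff ℝ (⊤ : ℕ∞) ξ)
    (hρ0 : ∀ s, 0 ≤ ρ s) (hξ0 : ∀ s, 0 ≤ ξ s)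
    (hρe : ∀ s, ρ (-s) = ρ s) (hξe : ∀ s, ξ (-s) = ξ s)
    (hρsupp : ∀ s, s ∉ Set.Icc (-1 : ℝ) 1 → ρ s = 0)
    (hξsupp : ∀ s, s ∉ Set.Icc (-1 : ℝ) 1 → ξ s = 0)
    (hρmono : AntitoneOn ρ (Set.Icc 0 1))
    (hξpos : ∀ s ∈ Set.Ioo (0 : ℝ) 1, 0 < ξ s)
    (hrel : ∀ s ∈ Set.Ioo (-1 : ℝ) 1, (n : ℝ) * ξ s = -s * deriv ρ s)
    (T : ℝ≥0∞) (hT : 0 < T) (ε : ℝ) (hε : 0 < ε)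
    (S : Set ℝ) (hS : S = {t : ℝ | 0 ≤ t ∧ ENNReal.ofReal t < T})
    (x : Fin N → ℝ → EuclideanSpace ℝ (Fin n))
    (m : Fin N → ℝ → ℝ) (hm : ∀ i, ∀ t ∈ S, 0 < m i t)
    (P : Fin N → Fin N → ℝ →
      (EuclideanSpace ℝ (Fin n) →L[ℝ] EuclideanSpace ℝ (Fin n)))
    (hden : ∀ i, ∀ t ∈ S, 0 < ∑ l, m l t * ξ (‖x l t - x i t‖ / ε))
    (ω : Fin N → Fin N → ℝ → ℝ)
    (hω : ∀ i j, ∀ t ∈ S, ω i j t =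
      if x j t = x i t then 0 else
        -((d : ℝ) / n) * m j t * deriv ρ (‖x j t - x i t‖ / ε) /
          (‖x j t - x i t‖ * ∑ l, m l t * ξ (‖x l t - x i t‖ / ε)))
    (hode : ∀ i, ∀ t ∈ S, HasDerivWithinAt (x i)
      ((1 / ε) • ∑ j ∈ Finset.univ.erase i, ω i j t • (P i j t) (x j t - x i t)) S t)
    (z : EuclideanSpace ℝ (Fin n))
    (R : ℝ → ℝ) (hR : ∀ t, R t = ⨆ i, ‖x i t - z‖)
    (c : ℝ → ℝ)
    (hne : ∀ t ∈ S, ∃ i j : Fin N,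
      ‖x i t - z‖ = R t ∧ 0 < ‖x i t - x j t‖ ∧ ‖x i t - x j t‖ < ε)
    (hc : ∀ t ∈ S, c t = sInf {v | ∃ i j : Fin N,
      ‖x i t - z‖ = R t ∧ 0 < ‖x i t - x j t‖ ∧ ‖x i t - x j t‖ < ε ∧
      v = ⟪(P i j t) (x i t - x j t), x i t - z⟫ / ‖x i t - x j t‖ ^ 2})
    (hccont : ContinuousOn c S) :
    ∀ t ∈ S, R t ^ 2 ≤ R 0 ^ 2 - 2 * d * ∫ s in (0 : ℝ)..t, c s := by
  intro t ht
  haveI : Nonempty (Fin N) := Fin.pos_iff_nonempty.mp hN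
  have hn : 0 < n := lt_of_lt_of_le hd hdn
  have hn' : (0:ℝ) < n := by exact_mod_cast hn
  have htS : 0 ≤ t ∧ ENNReal.ofReal t < T := by rw [hS] at ht; exact ht
  have hIccS : Set.Icc 0 t ⊆ S := by
    intro s hs; rw [hS]
    exact ⟨hs.1, lt_of_le_of_lt (ENNReal.ofReal_le_ofReal hs.2) htS.2⟩
  have hξ00 : ξ 0 = 0 := by
    have h := hrel 0 (by norm_num)
    simp only [neg_zero, zero_mul] at h
    exact (mul_eq_zero.mp h).resolve_left hn'.ne'
  have hξ1 : ∀ u : ℝ, 1 ≤ u → ξ u = 0 := aux_zero_of_ge_one hξsm.continuous hξsupp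
  have hρ1 : ∀ u : ℝ, 1 ≤ u → deriv ρ u = 0 := by
    intro u hu
    have hρu : ρ u = 0 := aux_zero_of_ge_one hρsm.continuous hρsupp u hu
    have hmin : IsLocalMin ρ u := Filter.Eventually.of_forall fun v => by
      rw [hρu]; exact hρ0 v
    exact hmin.deriv_eq_zero
  -- basic facts about R
  have hRmax : ∀ s : ℝ, ∀ i, ‖x i s - z‖ ≤ R s := by
    intro s i; rw [hR]
    exact le_ciSup (f := fun i => ‖x i s - z‖) (Set.Finite.bddAbove (Set.finite_range _)) i
  have hRex : ∀ s : ℝ, ∃ i, ‖x i s - z‖ = R s := by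
    intro s
    obtain ⟨i, hi⟩ := Finite.exists_max fun k => ‖x k s - z‖
    exact ⟨i, le_antisymm (hRmax s i) (by rw [hR]; exact ciSup_le hi)⟩
  have hR0 : ∀ s : ℝ, 0 ≤ R s := fun s =>
    le_trans (norm_nonneg _) (hRmax s (Classical.arbitrary _))
  set g : Fin N → ℝ → ℝ := fun i s => ‖x i s - z‖ ^ 2 with hg
  set F : ℝ → ℝ := fun s => Finset.univ.sup' Finset.univ_nonempty (fun i => g i s) with hF
  have hFmax : ∀ s i, g i s ≤ F s := fun s i => by
    simp only [hF]
    exact Finset.le_sup' (fun k => g k s) (Finset.mem_univ i)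
  have hFR : ∀ s, F s = R s ^ 2 := by
    intro s
    obtain ⟨i, hi⟩ := hRex s
    have h1 : F s = g i s := le_antisymm
      (Finset.sup'_le _ _ fun k _ => by
        simp only [hg]
        exact pow_le_pow_left₀ (norm_nonneg _) (hi ▸ hRmax s k) 2)
      (hFmax s i)
    rw [h1]; simp only [hg]; rw [hi]
  have hFnorm : ∀ s i, F s = g i s → ‖x i s - z‖ = R s := by
    intro s i h
    have h2 : ‖x i s - z‖ ^ 2 = R s ^ 2 := by rw [← hFR s, h]
    nlinarith [norm_nonneg (x i s - z), hR0 s]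
  -- derivative of g i within S
  have hgder : ∀ i, ∀ s ∈ S, HasDerivWithinAt (g i)
      (2 * ⟪(1 / ε) • ∑ j ∈ Finset.univ.erase i, ω i j s • (P i j s) (x j s - x i s),
        x i s - z⟫) S s := by
    intro i s hs
    have h1 : HasDerivWithinAt (fun u => x i u - z)
        ((1 / ε) • ∑ j ∈ Finset.univ.erase i, ω i j s • (P i j s) (x j s - x i s)) S s :=
      (hode i s hs).sub_const z
    have h2 := HasDerivWithinAt.inner ℝ h1 h1
    have h3 : HasDerivWithinAt (g i)
        (⟪x i s - z, (1 / ε) • ∑ j ∈ Finset.univ.erase i, ω i j s • (P i j s) (x j s - x i s)⟫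
          + ⟪(1 / ε) • ∑ j ∈ Finset.univ.erase i, ω i j s • (P i j s) (x j s - x i s),
            x i s - z⟫) S s :=
      h2.congr (fun u _ => (real_inner_self_eq_norm_sq _).symm)
        ((real_inner_self_eq_norm_sq _).symm)
    have h4 : ⟪x i s - z, (1 / ε) • ∑ j ∈ Finset.univ.erase i,
          ω i j s • (P i j s) (x j s - x i s)⟫
        + ⟪(1 / ε) • ∑ j ∈ Finset.univ.erase i, ω i j s • (P i j s) (x j s - x i s),
            x i s - z⟫
        = 2 * ⟪(1 / ε) • ∑ j ∈ Finset.univ.erase i, ω i j s • (P i j s) (x j s - x i s),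
            x i s - z⟫ := by
      rw [real_inner_comm]; ring
    rw [h4] at h3
    exact h3
  -- the key derivative bound at a maximizer
  have hkey : ∀ s ∈ S, ∀ i, ‖x i s - z‖ = R s →
      2 * ⟪(1 / ε) • ∑ j ∈ Finset.univ.erase i, ω i j s • (P i j s) (x j s - x i s),
        x i s - z⟫ ≤ -(2 * d * c s) := by
    intro s hs i hiR
    have hDen : 0 < ∑ l, m l s * ξ (‖x l s - x i s‖ / ε) := hden i s hs
    set Dl := ∑ l, m l s * ξ (‖x l s - x i s‖ / ε) with hDl
    have hterm : ∀ j ∈ Finset.univ.erase i,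
        ω i j s * ⟪(P i j s) (x j s - x i s), x i s - z⟫
          ≤ -(d * ε * c s) * (m j s * ξ (‖x j s - x i s‖ / ε) / Dl) := by
      intro j _
      by_cases hxx : x j s = x i s
      · rw [hω i j s hs, if_pos hxx, hxx]
        simp [hξ00]
      · have hr : 0 < ‖x j s - x i s‖ := by
          rw [norm_sub_pos_iff]; exact hxx
        set r := ‖x j s - x i s‖ with hrdef
        have hu0 : 0 < r / ε := div_pos hr hε
        by_cases hu1 : 1 ≤ r / ε
        · have hω0 : ω i j s = 0 := by
            rw [hω i j s hs, if_neg hxx, ← hrdef, hρ1 _ hu1]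
            simp
          rw [hω0, hξ1 _ hu1]
          simp
        · push_neg at hu1
          have hrε : r < ε := (div_lt_one hε).mp hu1
          have hrel' := hrel (r / ε) ⟨by linarith, hu1⟩
          have hmj : 0 < m j s := hm j s hs
          have hρ' : deriv ρ (r / ε) = -((n : ℝ) * ξ (r / ε)) / (r / ε) := by
            rw [eq_div_iff hu0.ne']
            linear_combination hrel'
          have hωv : ω i j s = (d : ℝ) * ε * (m j s * ξ (r / ε)) / (r ^ 2 * Dl) := by
            rw [hω i j s hs, if_neg hxx, ← hrdef, hρ', ← hDl]
            field_simp
          have hmem : (⟪(P i j s) (x i s - x j s), x i s - z⟫ / ‖x i s - x j s‖ ^ 2)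
              ∈ {v | ∃ i' j' : Fin N, ‖x i' s - z‖ = R s ∧ 0 < ‖x i' s - x j' s‖ ∧
                ‖x i' s - x j' s‖ < ε ∧
                v = ⟪(P i' j' s) (x i' s - x j' s), x i' s - z⟫ / ‖x i' s - x j' s‖ ^ 2} :=
            ⟨i, j, hiR, by rw [norm_sub_rev]; exact hr, by rw [norm_sub_rev]; exact hrε, rfl⟩
          have hfin : Set.Finite {v | ∃ i' j' : Fin N, ‖x i' s - z‖ = R s ∧
              0 < ‖x i' s - x j' s‖ ∧ ‖x i' s - x j' s‖ < ε ∧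
              v = ⟪(P i' j' s) (x i' s - x j' s), x i' s - z⟫ / ‖x i' s - x j' s‖ ^ 2} :=
            Set.Finite.subset
              (Set.finite_range fun p : Fin N × Fin N =>
                ⟪(P p.1 p.2 s) (x p.1 s - x p.2 s), x p.1 s - z⟫ / ‖x p.1 s - x p.2 s‖ ^ 2)
              (by rintro v ⟨i', j', _, _, _, hv⟩; exact ⟨(i', j'), hv.symm⟩)
          have hcle : c s ≤ ⟪(P i j s) (x i s - x j s), x i s - z⟫ / ‖x i s - x j s‖ ^ 2 := by
            rw [hc s hs]; exact csInf_le hfin.bddBelow hmem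
          have hr' : ‖x i s - x j s‖ = r := by rw [hrdef, norm_sub_rev]
          rw [hr'] at hcle
          have hinge : c s * r ^ 2 ≤ ⟪(P i j s) (x i s - x j s), x i s - z⟫ :=
            (le_div_iff₀ (by positivity)).mp hcle
          have hflip : ⟪(P i j s) (x j s - x i s), x i s - z⟫
              = -⟪(P i j s) (x i s - x j s), x i s - z⟫ := by
            rw [show x j s - x i s = -(x i s - x j s) by abel, map_neg, inner_neg_left]
          have hωnn : 0 ≤ ω i j s := by
            rw [hωv]
            have := hξ0 (r / ε)
            positivity
          rw [hflip, mul_neg]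
          have h5 : ω i j s * (c s * r ^ 2)
              ≤ ω i j s * ⟪(P i j s) (x i s - x j s), x i s - z⟫ :=
            mul_le_mul_of_nonneg_left hinge hωnn
          have h6 : ω i j s * (c s * r ^ 2) = d * ε * c s * (m j s * ξ (r / ε) / Dl) := by
            rw [hωv]; field_simp
          have h7 : -(ω i j s * ⟪(P i j s) (x i s - x j s), x i s - z⟫)
              ≤ -(d * ε * c s * (m j s * ξ (r / ε) / Dl)) := by
            rw [← h6]; exact neg_le_neg h5
          calc -(ω i j s * ⟪(P i j s) (x i s - x j s), x i s - z⟫)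
              ≤ -(d * ε * c s * (m j s * ξ (r / ε) / Dl)) := h7
            _ = -(d * ε * c s) * (m j s * ξ (r / ε) / Dl) := by ring
    have hsum : ∑ j ∈ Finset.univ.erase i, m j s * ξ (‖x j s - x i s‖ / ε) = Dl := by
      rw [hDl, ← Finset.add_sum_erase _ _ (Finset.mem_univ i)]
      simp [hξ00]
    have htot : ⟪(1 / ε) • ∑ j ∈ Finset.univ.erase i, ω i j s • (P i j s) (x j s - x i s),
        x i s - z⟫ ≤ -(d * c s) := by
      rw [real_inner_smul_left, sum_inner]
      have hsle : ∑ j ∈ Finset.univ.erase i,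
          ⟪ω i j s • (P i j s) (x j s - x i s), x i s - z⟫ ≤ -(d * ε * c s) := by
        calc ∑ j ∈ Finset.univ.erase i, ⟪ω i j s • (P i j s) (x j s - x i s), x i s - z⟫
            = ∑ j ∈ Finset.univ.erase i,
              ω i j s * ⟪(P i j s) (x j s - x i s), x i s - z⟫ :=
              Finset.sum_congr rfl fun j _ => real_inner_smul_left _ _ _
          _ ≤ ∑ j ∈ Finset.univ.erase i,
              -(d * ε * c s) * (m j s * ξ (‖x j s - x i s‖ / ε) / Dl) :=
              Finset.sum_le_sum hterm
          _ = -(d * ε * c s) * ((∑ j ∈ Finset.univ.erase i,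
              m j s * ξ (‖x j s - x i s‖ / ε)) / Dl) := by
              rw [← Finset.mul_sum, ← Finset.sum_div]
          _ = -(d * ε * c s) := by rw [hsum, div_self hDen.ne', mul_one]
      calc (1 / ε) * ∑ j ∈ Finset.univ.erase i,
          ⟪ω i j s • (P i j s) (x j s - x i s), x i s - z⟫
          ≤ (1 / ε) * -(d * ε * c s) := by
            apply mul_le_mul_of_nonneg_left hsle
            positivity
        _ = -(d * c s) := by field_simp
    linarith [htot]
  -- continuity
  have hgcont : ∀ i, ContinuousOn (g i) S := fun i s hs => (hgder i s hs).continuousWithinAt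
  have hFcont : ContinuousOn F S :=
    ContinuousOn.finset_sup'_apply Finset.univ_nonempty fun i _ => hgcont i
  -- integrability of c
  have hconIcc : ContinuousOn c (Set.Icc 0 t) := hccont.mono hIccS
  have hci : IntervalIntegrable c MeasureTheory.volume 0 t := by
    apply ContinuousOn.intervalIntegrable
    rwa [Set.uIcc_of_le htS.1]
  set B : ℝ → ℝ := fun u => R 0 ^ 2 - 2 * d * ∫ s in (0:ℝ)..u, c s with hB
  have hBcont : ContinuousOn B (Set.Icc 0 t) := by
    apply continuousOn_const.sub
    apply continuousOn_const.mul
    have hio : MeasureTheory.IntegrableOn c (Set.uIcc 0 t) MeasureTheory.volume := by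
      rw [Set.uIcc_of_le htS.1]
      exact hconIcc.integrableOn_compact isCompact_Icc
    have := intervalIntegral.continuousOn_primitive_interval hio
    rwa [Set.uIcc_of_le htS.1] at this
  have hB' : ∀ u ∈ Set.Ico 0 t, HasDerivWithinAt B (-(2 * d * c u)) (Set.Ici u) u := by
    intro u hu
    have huS : u ∈ S := hIccS ⟨hu.1, hu.2.le⟩
    have hIoomem : Set.Ioo u t ∈ 𝓝[>] u := Ioo_mem_nhdsGT_of_mem ⟨le_refl u, hu.2⟩
    have hIooS : Set.Ioo u t ⊆ S := fun v hv => hIccS ⟨hu.1.trans hv.1.le, hv.2.le⟩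
    have hSmem : S ∈ 𝓝[>] u := mem_of_superset hIoomem hIooS
    have hmeas : StronglyMeasurableAtFilter c (𝓝[>] u) :=
      ⟨Set.Ioo u t, hIoomem, (hccont.mono hIooS).aestronglyMeasurable measurableSet_Ioo⟩
    have hcw : ContinuousWithinAt c (Set.Ioi u) u :=
      (hccont u huS).mono_left (nhdsWithin_le_of_mem hSmem)
    have hint' : IntervalIntegrable c MeasureTheory.volume 0 u := by
      apply hci.mono_set
      rw [Set.uIcc_of_le hu.1, Set.uIcc_of_le htS.1]
      exact Set.Icc_subset_Icc le_rfl hu.2.le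
    have hprim := intervalIntegral.integral_hasDerivWithinAt_right
      (s := Set.Ici u) (t := Set.Ioi u) hint' hmeas hcw
    have hcomb := (hprim.const_mul (2 * (d:ℝ))).const_sub (R 0 ^ 2)
    convert hcomb using 1
  -- the bound on the liminf of slopes
  have hbound : ∀ x₀ ∈ Set.Ico 0 t, ∀ r, -(2 * (d:ℝ) * c x₀) < r →
      ∃ᶠ zz in 𝓝[>] x₀, slope F x₀ zz < r := by
    intro x₀ hx₀ r hr
    have hx₀S : x₀ ∈ S := hIccS ⟨hx₀.1, hx₀.2.le⟩
    have hIoomem : Set.Ioo x₀ t ∈ 𝓝[>] x₀ := Ioo_mem_nhdsGT_of_mem ⟨le_refl _, hx₀.2⟩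
    have hIooS : Set.Ioo x₀ t ⊆ S := fun v hv => hIccS ⟨hx₀.1.trans hv.1.le, hv.2.le⟩
    have hSmem : S ∈ 𝓝[>] x₀ := mem_of_superset hIoomem hIooS
    apply aux_freq_slope g F
    · intro zz
      obtain ⟨i, _, hi⟩ := Finset.exists_mem_eq_sup' Finset.univ_nonempty (fun i => g i zz)
      exact ⟨i, hi⟩
    · exact (hFcont x₀ hx₀S).mono_left (nhdsWithin_le_of_mem hSmem)
    · exact fun i => (hgcont i x₀ hx₀S).mono_left (nhdsWithin_le_of_mem hSmem)
    · intro i hieq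
      have hiR : ‖x i x₀ - z‖ = R x₀ := hFnorm x₀ i hieq
      have hder := hgder i x₀ hx₀S
      have hlt : 2 * ⟪(1 / ε) • ∑ j ∈ Finset.univ.erase i,
          ω i j x₀ • (P i j x₀) (x j x₀ - x i x₀), x i x₀ - z⟫ < r :=
        lt_of_le_of_lt (hkey x₀ hx₀S i hiR) hr
      have hmem2 : S \ {x₀} ∈ 𝓝[>] x₀ :=
        mem_of_superset hIoomem fun v hv => ⟨hIooS hv, by
          simp only [Set.mem_singleton_iff]; exact ne_of_gt hv.1⟩
      have htend : Tendsto (slope (g i) x₀) (𝓝[>] x₀)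
          (𝓝 (2 * ⟪(1 / ε) • ∑ j ∈ Finset.univ.erase i,
            ω i j x₀ • (P i j x₀) (x j x₀ - x i x₀), x i x₀ - z⟫)) :=
        (hasDerivWithinAt_iff_tendsto_slope.mp hder).mono_left (nhdsWithin_le_of_mem hmem2)
      exact htend.eventually_lt_const hlt
  have happ := image_le_of_liminf_slope_right_le_deriv_boundary
    (f := F) (B := B) (B' := fun u => -(2 * (d:ℝ) * c u)) (a := 0) (b := t)
    (hFcont.mono hIccS)
    (by rw [hFR 0]; simp [hB, intervalIntegral.integral_same])
    hBcont hB' hbound (Set.right_mem_Icc.mpr htS.1)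
  rw [← hFR t]
  exact happ
end

section
/- (Planar barrier for one step of the implicit scheme.) Let N ≥ 1, τ > 0, ε > 0, and let X = (x_i)_{i=1}^{N}, Y = (y_i)_{i=1}^{N} be families of points of ℝⁿ, ω_{ij} ≥ 0, and Π_{ij} : ℝⁿ → ℝⁿ linear maps, such that y_i = x_i + (τ/ε) Σ_{j=1}^{N} ω_{ij} Π_{ij}(y_j − y_i) for all i. Let ν ∈ ℝⁿ and μ ∈ ℝ with x_i·ν ≤ μ for all i, and assume that for every index i with y_i·ν = max_k y_k·ν and every j, ⟨Π_{ij}(y_j − y_i), ν⟩ ≤ 0. Then y_i·ν ≤ μ for all i. Consequently, by induction, half-spaces containing the initial point cloud are barriers for the implicit time-discrete mean curvature scheme, independently of the choice of masses. -/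
open scoped RealInnerProductSpace

theorem stmt15 {n N : ℕ} (hN : 1 ≤ N) (τ ε : ℝ) (hτ : 0 < τ) (hε : 0 < ε)
    (x y : Fin N → EuclideanSpace ℝ (Fin n))
    (ω : Fin N → Fin N → ℝ) (hω : ∀ i j, 0 ≤ ω i j)
    (P : Fin N → Fin N → (EuclideanSpace ℝ (Fin n) →L[ℝ] EuclideanSpace ℝ (Fin n)))
    (hscheme : ∀ i, y i = x i + (τ / ε) • ∑ j, ω i j • (P i j) (y j - y i))
    (ν : EuclideanSpace ℝ (Fin n)) (μ : ℝ)
    (hinit : ∀ i, ⟪x i, ν⟫ ≤ μ)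
    (hbar : ∀ i, (∀ k, ⟪y k, ν⟫ ≤ ⟪y i, ν⟫) → ∀ j, ⟪(P i j) (y j - y i), ν⟫ ≤ 0) :
    ∀ i, ⟪y i, ν⟫ ≤ μ := by
  have hNe : (Finset.univ : Finset (Fin N)).Nonempty := by
    simpa [Finset.univ_nonempty_iff] using Fin.pos_iff_nonempty.mp hN
  obtain ⟨i0, _, hmax⟩ := Finset.exists_max_image Finset.univ (fun k => ⟪y k, ν⟫) hNe
  have hmax' : ∀ k, ⟪y k, ν⟫ ≤ ⟪y i0, ν⟫ := fun k => hmax k (Finset.mem_univ k)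
  have key : ⟪y i0, ν⟫ ≤ μ := by
    have h := hscheme i0
    have : ⟪y i0, ν⟫ = ⟪x i0, ν⟫ + (τ / ε) * ∑ j, ω i0 j * ⟪(P i0 j) (y j - y i0), ν⟫ := by
      conv_lhs => rw [h]
      rw [inner_add_left, real_inner_smul_left, sum_inner]
      simp only [real_inner_smul_left]
    rw [this]
    have hsum : ∑ j, ω i0 j * ⟪(P i0 j) (y j - y i0), ν⟫ ≤ 0 := by
      apply Finset.sum_nonpos
      intro j _
      exact mul_nonpos_of_nonneg_of_nonpos (hω i0 j) (hbar i0 hmax' j)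
    have : (τ / ε) * ∑ j, ω i0 j * ⟪(P i0 j) (y j - y i0), ν⟫ ≤ 0 :=
      mul_nonpos_of_nonneg_of_nonpos (le_of_lt (div_pos hτ hε)) hsum
    linarith [hinit i0]
  intro i
  exact le_trans (hmax' i) key
end

section
/- (Sphere comparison principle for one step of the implicit scheme.) Let 1 ≤ d ≤ n be integers, N ≥ 1, τ > 0, ε > 0. Let X = (x_i)_{i=1}^{N}, Y = (y_i)_{i=1}^{N} be families of points of ℝⁿ, m_j > 0 masses, and Π_{ij} : ℝⁿ → ℝⁿ linear maps. Assume Σ_{l=1}^{N} m_l ξ(|y_l−y_i|/ε) > 0 for all i, and y_i = x_i + (τ/ε) Σ_{j≠i} ω_{ij} Π_{ij}(y_j − y_i), where ω_{ij} = −(d/n) · m_j ρ′(|y_j−y_i|/ε) / (|y_j−y_i| · Σ_{l} m_l ξ(|y_l−y_i|/ε)) when y_j ≠ y_i, and ω_{ij} = 0 when y_j = y_i. Fix z ∈ ℝⁿ, set R_X = max_i |x_i − z|, R_Y = max_i |y_i − z|, and c = min{ ⟨Π_{ij}(y_i−y_j), y_i−z⟩ / |y_i−y_j|² : i with |y_i−z|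 = R_Y and j with 0 < |y_i−y_j| < ε }, assumed taken over a nonempty set. Then R_Y² ≤ R_X² − 2·d·c·τ. -/
open scoped RealInnerProductSpace
set_option maxHeartbeats 1000000 in
open Classical in
theorem stmt16 {n d N : ℕ} (hd : 1 ≤ d) (hdn : d ≤ n) (hN : 1 ≤ N)
    (ρ ξ : ℝ → ℝ)
    (hρsm : ContDiff ℝ (⊤ : ℕ∞) ρ) (hξsm : ContDiff ℝ (⊤ : ℕ∞) ξ)
    (hρ0 : ∀ s, 0 ≤ ρ s) (hξ0 : ∀ s, 0 ≤ ξ s)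
    (hρe : ∀ s, ρ (-s) = ρ s) (hξe : ∀ s, ξ (-s) = ξ s)
    (hρsupp : ∀ s, s ∉ Set.Icc (-1 : ℝ) 1 → ρ s = 0)
    (hξsupp : ∀ s, s ∉ Set.Icc (-1 : ℝ) 1 → ξ s = 0)
    (hρmono : AntitoneOn ρ (Set.Icc 0 1))
    (hξpos : ∀ s ∈ Set.Ioo (0 : ℝ) 1, 0 < ξ s)
    (hrel : ∀ s ∈ Set.Ioo (-1 : ℝ) 1, (n : ℝ) * ξ s = -s * deriv ρ s)
    (τ ε : ℝ) (hτ : 0 < τ) (hε : 0 < ε)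
    (x y : Fin N → EuclideanSpace ℝ (Fin n))
    (m : Fin N → ℝ) (hm : ∀ j, 0 < m j)
    (P : Fin N → Fin N → (EuclideanSpace ℝ (Fin n) →L[ℝ] EuclideanSpace ℝ (Fin n)))
    (hden : ∀ i, 0 < ∑ l, m l * ξ (‖y l - y i‖ / ε))
    (ω : Fin N → Fin N → ℝ)
    (hω : ∀ i j, ω i j =
      if y j = y i then 0 else
        -((d : ℝ) / n) * m j * deriv ρ (‖y j - y i‖ / ε) /
          (‖y j - y i‖ * ∑ l, m l * ξ (‖y l - y i‖ / ε)))
    (hscheme : ∀ i, y i = x i +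
      (τ / ε) • ∑ j ∈ Finset.univ.erase i, ω i j • (P i j) (y j - y i))
    (z : EuclideanSpace ℝ (Fin n))
    (RX RY : ℝ) (hRX : RX = ⨆ i, ‖x i - z‖) (hRY : RY = ⨆ i, ‖y i - z‖)
    (c : ℝ)
    (hne : ∃ i j : Fin N, ‖y i - z‖ = RY ∧ 0 < ‖y i - y j‖ ∧ ‖y i - y j‖ < ε)
    (hc : c = sInf {v | ∃ i j : Fin N,
      ‖y i - z‖ = RY ∧ 0 < ‖y i - y j‖ ∧ ‖y i - y j‖ < ε ∧
      v = ⟪(P i j) (y i - y j), y i - z⟫ / ‖y i - y j‖ ^ 2}) :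
    RY ^ 2 ≤ RX ^ 2 - 2 * d * c * τ := by

  -- basic facts
  have hn1 : 1 ≤ n := le_trans hd hdn
  have hnR : (0:ℝ) < n := by exact_mod_cast hn1
  have hρcont : Continuous ρ := hρsm.continuous
  have hξcont : Continuous ξ := hξsm.continuous
  have hρ1 : ρ 1 = 0 := by
    have h0 : Set.EqOn ρ (fun _ => (0:ℝ)) (Set.Ioi 1) := fun s hs => by
      exact hρsupp s (by simp only [Set.mem_Icc, not_and_or, not_le]; right; exact hs)
    have h2 := h0.closure hρcont continuous_const
    have h1 : (1:ℝ) ∈ closure (Set.Ioi (1:ℝ)) := by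
      rw [closure_Ioi]; exact Set.self_mem_Ici
    exact h2 h1
  have hξ1 : ξ 1 = 0 := by
    have h0 : Set.EqOn ξ (fun _ => (0:ℝ)) (Set.Ioi 1) := fun s hs => by
      exact hξsupp s (by simp only [Set.mem_Icc, not_and_or, not_le]; right; exact hs)
    have h2 := h0.closure hξcont continuous_const
    have h1 : (1:ℝ) ∈ closure (Set.Ioi (1:ℝ)) := by
      rw [closure_Ioi]; exact Set.self_mem_Ici
    exact h2 h1
  have hρzero : ∀ s, (1:ℝ) ≤ s → ρ s = 0 := by
    intro s hs
    rcases eq_or_lt_of_le hs with h | h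
    · rw [← h]; exact hρ1
    · exact hρsupp s (by simp only [Set.mem_Icc, not_and_or, not_le]; right; exact h)
  have hξzero : ∀ s, (1:ℝ) ≤ s → ξ s = 0 := by
    intro s hs
    rcases eq_or_lt_of_le hs with h | h
    · rw [← h]; exact hξ1
    · exact hξsupp s (by simp only [Set.mem_Icc, not_and_or, not_le]; right; exact h)
  have hρd1 : ∀ s, (1:ℝ) ≤ s → deriv ρ s = 0 := by
    intro s hs
    have hmin : IsLocalMin ρ s := Filter.Eventually.of_forall (fun t => by
      rw [hρzero s hs]; exact hρ0 t)
    exact hmin.deriv_eq_zero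
  have hξ00 : ξ 0 = 0 := by
    have h := hrel 0 (by constructor <;> norm_num)
    simp only [neg_zero, zero_mul] at h
    have := mul_eq_zero.mp h
    rcases this with h' | h'
    · exact absurd h' (by positivity)
    · exact h'
  have hρdle : ∀ s, (0:ℝ) < s → deriv ρ s ≤ 0 := by
    intro s hs
    rcases lt_or_ge s 1 with h | h
    · have hr := hrel s ⟨by linarith, h⟩
      have h1 : 0 ≤ (n:ℝ) * ξ s := mul_nonneg hnR.le (hξ0 s)
      nlinarith
    · exact le_of_eq (hρd1 s h)
  -- main setup
  obtain ⟨i₀, j₀, hi₀, hj₀1, hj₀2⟩ := hne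
  set D := ∑ l, m l * ξ (‖y l - y i₀‖ / ε) with hDdef
  have hDpos : 0 < D := hden i₀
  -- pointwise identity
  have key : ∀ j, ω i₀ j * ‖y j - y i₀‖ ^ 2
      = ((d:ℝ) * ε / D) * (m j * ξ (‖y j - y i₀‖ / ε)) := by
    intro j
    by_cases hyj : y j = y i₀
    · rw [hω i₀ j, if_pos hyj, hyj]
      simp [hξ00]
    · rw [hω i₀ j, if_neg hyj]
      have hrpos : 0 < ‖y j - y i₀‖ := by
        rw [norm_pos_iff]; exact sub_ne_zero.mpr hyj
      set r := ‖y j - y i₀‖ with hrdef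
      rcases lt_or_ge r ε with hcase | hcase
      · have hsmem : r / ε ∈ Set.Ioo (-1:ℝ) 1 := by
          constructor
          · have : (0:ℝ) < r / ε := div_pos hrpos hε
            linarith
          · exact (div_lt_one hε).mpr hcase
        have hrel' := hrel _ hsmem
        have hrε : (0:ℝ) < r / ε := div_pos hrpos hε
        have hderiv : deriv ρ (r / ε) = -((n:ℝ) * ξ (r / ε)) * ε / r := by
          field_simp at hrel' ⊢
          nlinarith [hrel']
        rw [hderiv, ← hDdef]
        field_simp
      · have h1 : (1:ℝ) ≤ r / ε := (one_le_div hε).mpr hcase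
        rw [hρd1 _ h1, hξzero _ h1]
        simp
  -- sum identity
  have hsum : ∑ j ∈ Finset.univ.erase i₀, ω i₀ j * ‖y j - y i₀‖ ^ 2 = (d:ℝ) * ε := by
    have h1 : ∑ j ∈ Finset.univ.erase i₀, ω i₀ j * ‖y j - y i₀‖ ^ 2
        = ∑ j ∈ Finset.univ.erase i₀, ((d:ℝ) * ε / D) * (m j * ξ (‖y j - y i₀‖ / ε)) :=
      Finset.sum_congr rfl (fun j _ => key j)
    rw [h1, ← Finset.mul_sum]
    have h2 : ∑ j ∈ Finset.univ.erase i₀, (m j * ξ (‖y j - y i₀‖ / ε)) = D := by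
      rw [Finset.sum_erase_eq_sub (Finset.mem_univ i₀)]
      simp [hξ00]
      exact hDdef.symm
    rw [h2]
    field_simp
  -- c is a lower bound
  have hcle : ∀ i j : Fin N, ‖y i - z‖ = RY → 0 < ‖y i - y j‖ → ‖y i - y j‖ < ε →
      c ≤ ⟪(P i j) (y i - y j), y i - z⟫ / ‖y i - y j‖ ^ 2 := by
    intro i j h1 h2 h3
    have hSfin : ({v | ∃ i j : Fin N,
        ‖y i - z‖ = RY ∧ 0 < ‖y i - y j‖ ∧ ‖y i - y j‖ < ε ∧
        v = ⟪(P i j) (y i - y j), y i - z⟫ / ‖y i - y j‖ ^ 2}).Finite := by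
      apply Set.Finite.subset (Set.finite_range (fun p : Fin N × Fin N =>
        ⟪(P p.1 p.2) (y p.1 - y p.2), y p.1 - z⟫ / ‖y p.1 - y p.2‖ ^ 2))
      rintro v ⟨i', j', _, _, _, hv⟩
      exact ⟨(i', j'), hv.symm⟩
    rw [hc]
    exact csInf_le hSfin.bddBelow ⟨i, j, h1, h2, h3, rfl⟩
  -- termwise inequality
  have hterm : ∀ j ∈ Finset.univ.erase i₀,
      ω i₀ j * ⟪(P i₀ j) (y j - y i₀), y i₀ - z⟫ ≤ -c * (ω i₀ j * ‖y j - y i₀‖ ^ 2) := by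
    intro j _
    by_cases hyj : y j = y i₀
    · rw [hω i₀ j, if_pos hyj]; simp
    · have hrpos : 0 < ‖y j - y i₀‖ := by
        rw [norm_pos_iff]; exact sub_ne_zero.mpr hyj
      have hωnn : 0 ≤ ω i₀ j := by
        rw [hω i₀ j, if_neg hyj]
        apply div_nonneg
        · have hd' := hρdle (‖y j - y i₀‖ / ε) (div_pos hrpos hε)
          have hdn' : (0:ℝ) ≤ (d:ℝ) / n := by positivity
          have hprod := mul_nonneg (mul_nonneg hdn' (hm j).le) (neg_nonneg.mpr hd')
          nlinarith [hprod]
        · exact mul_nonneg hrpos.le hDpos.le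
      rcases lt_or_ge (‖y j - y i₀‖) ε with hcase | hcase
      · have hrev : ‖y i₀ - y j‖ = ‖y j - y i₀‖ := norm_sub_rev _ _
        have hv := hcle i₀ j hi₀ (by rw [hrev]; exact hrpos) (by rw [hrev]; exact hcase)
        have hr2 : 0 < ‖y i₀ - y j‖ ^ 2 := by rw [hrev]; positivity
        have h5 : c * ‖y i₀ - y j‖ ^ 2 ≤ ⟪(P i₀ j) (y i₀ - y j), y i₀ - z⟫ :=
          (le_div_iff₀ hr2).mp hv
        have hmap : (P i₀ j) (y j - y i₀) = -((P i₀ j) (y i₀ - y j)) := by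
          rw [← map_neg]; congr 1; abel
        have h6 : ⟪(P i₀ j) (y j - y i₀), y i₀ - z⟫ ≤ -(c * ‖y j - y i₀‖ ^ 2) := by
          rw [hmap, inner_neg_left]
          rw [← hrev]
          linarith
        calc ω i₀ j * ⟪(P i₀ j) (y j - y i₀), y i₀ - z⟫
            ≤ ω i₀ j * (-(c * ‖y j - y i₀‖ ^ 2)) := mul_le_mul_of_nonneg_left h6 hωnn
          _ = -c * (ω i₀ j * ‖y j - y i₀‖ ^ 2) := by ring
      · have hω0 : ω i₀ j = 0 := by
          rw [hω i₀ j, if_neg hyj, hρd1 _ ((one_le_div hε).mpr hcase)]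
          simp
        simp [hω0]
  -- expansion
  have hRY' : ‖y i₀ - z‖ = RY := hi₀
  have h1 : y i₀ - z = (x i₀ - z) +
      (τ / ε) • ∑ j ∈ Finset.univ.erase i₀, ω i₀ j • (P i₀ j) (y j - y i₀) := by
    conv_lhs => rw [hscheme i₀]
    abel
  have hexp : RY ^ 2 = ⟪x i₀ - z, y i₀ - z⟫ +
      (τ / ε) * ∑ j ∈ Finset.univ.erase i₀, ω i₀ j * ⟪(P i₀ j) (y j - y i₀), y i₀ - z⟫ := by
    have h2 : (RY:ℝ) ^ 2 = ⟪y i₀ - z, y i₀ - z⟫ := by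
      rw [real_inner_self_eq_norm_sq, hRY']
    rw [h2]
    nth_rewrite 1 [h1]
    rw [inner_add_left, real_inner_smul_left, sum_inner]
    congr 2
    · exact Finset.sum_congr rfl (fun j _ => real_inner_smul_left _ _ _)
  have hsum2 : ∑ j ∈ Finset.univ.erase i₀, ω i₀ j * ⟪(P i₀ j) (y j - y i₀), y i₀ - z⟫
      ≤ -c * ((d:ℝ) * ε) := by
    calc ∑ j ∈ Finset.univ.erase i₀, ω i₀ j * ⟪(P i₀ j) (y j - y i₀), y i₀ - z⟫
        ≤ ∑ j ∈ Finset.univ.erase i₀, -c * (ω i₀ j * ‖y j - y i₀‖ ^ 2) :=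
          Finset.sum_le_sum hterm
      _ = -c * ∑ j ∈ Finset.univ.erase i₀, ω i₀ j * ‖y j - y i₀‖ ^ 2 := by
          rw [Finset.mul_sum]
      _ = -c * ((d:ℝ) * ε) := by rw [hsum]
  have hxle : ‖x i₀ - z‖ ≤ RX := by
    rw [hRX]
    exact le_ciSup (f := fun i => ‖x i - z‖) (Set.Finite.bddAbove (Set.finite_range _)) i₀
  have hRY0 : 0 ≤ RY := hRY' ▸ norm_nonneg _
  have hinner_le : ⟪x i₀ - z, y i₀ - z⟫ ≤ RX * RY := by
    calc ⟪x i₀ - z, y i₀ - z⟫ ≤ ‖x i₀ - z‖ * ‖y i₀ - z‖ := real_inner_le_norm _ _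
      _ ≤ RX * RY := by
          rw [hRY']
          exact mul_le_mul_of_nonneg_right hxle hRY0
  have hstep : (τ / ε) * (∑ j ∈ Finset.univ.erase i₀,
      ω i₀ j * ⟪(P i₀ j) (y j - y i₀), y i₀ - z⟫) ≤ (τ / ε) * (-c * ((d:ℝ) * ε)) :=
    mul_le_mul_of_nonneg_left hsum2 (by positivity)
  have hτε : (τ / ε) * (-c * ((d:ℝ) * ε)) = -((d:ℝ) * c * τ) := by
    field_simp
  have hmain : RY ^ 2 ≤ RX * RY - (d:ℝ) * c * τ := by
    rw [hexp]
    rw [hτε] at hstep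
    linarith
  nlinarith [sq_nonneg (RX - RY), hmain]
end

section
/- Let ρ : ℝ → ℝ be an even C¹ function whose derivative ρ′ is Lipschitz with constant L (so in particular ρ′(0) = 0). For ε > 0 and x ∈ ℝⁿ define Φ : ℝⁿ → ℝⁿ by Φ(y) = (1/ε) ρ′(|y−x|/ε) (y−x)/|y−x| for y ≠ x and Φ(x) = 0. Then Φ is the gradient of the function y ↦ ρ(|y−x|/ε), and Φ is Lipschitz on ℝⁿ with Lipschitz constant at most L/ε². -/
/-!
For a profile `g` with `g 0 = 0` and Lipschitz constant `K`, the radial field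
`v ↦ g ‖v‖ • (v / ‖v‖)` is `K`-Lipschitz: writing `vᵢ = rᵢ • uᵢ` with unit `uᵢ`, the identity
`‖a • u₁ - b • u₂‖² = (a - b)² + a b ‖u₁ - u₂‖²` turns `‖F v₁ - F v₂‖²` into
`(g r₁ - g r₂)² + g r₁ g r₂ ‖u₁ - u₂‖²`, and termwise, since `|g r| ≤ K r`, this is at most
`K² ((r₁ - r₂)² + r₁ r₂ ‖u₁ - u₂‖²) = K² ‖v₁ - v₂‖²`. Here `g s = ε⁻¹ ρ'(s / ε)` has Lipschitz
constant `L / ε²`, and `g 0 = 0` because `ρ'` is odd. The gradient formula is the chain rule away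
from `x`; at `x` it is `ρ'(0) = 0`.
-/

open InnerProductSpace Asymptotics Filter Topology NNReal

section RadialField

variable {E : Type*} [NormedAddCommGroup E] [InnerProductSpace ℝ E]

theorem hasFDerivAt_norm {v : E} (hv : v ≠ 0) :
    HasFDerivAt (fun w : E => ‖w‖) (‖v‖⁻¹ • innerSL ℝ v) v := by
  have hv' : 0 < ‖v‖ := norm_pos_iff.mpr hv
  have h := (Real.hasDerivAt_sqrt (pow_pos hv' 2).ne').comp_hasFDerivAt v
    (hasStrictFDerivAt_norm_sq v).hasFDerivAt
  simp only [Function.comp_def, Real.sqrt_sq (norm_nonneg _)] at h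
  refine h.congr_fderiv ?_
  ext w
  simp only [one_div, mul_inv_rev, smul_apply, coe_innerSL_apply, nsmul_eq_mul,
    Nat.cast_ofNat, smul_eq_mul]
  field_simp

theorem norm_smul_sub_smul_sq {u₁ u₂ : E} (h₁ : ‖u₁‖ = 1) (h₂ : ‖u₂‖ = 1) (a b : ℝ) :
    ‖a • u₁ - b • u₂‖ ^ 2 = (a - b) ^ 2 + a * b * ‖u₁ - u₂‖ ^ 2 := by
  rw [norm_sub_sq_real, norm_sub_sq_real, norm_smul, norm_smul, real_inner_smul_left,
    real_inner_smul_right, h₁, h₂, Real.norm_eq_abs, Real.norm_eq_abs, mul_pow, mul_pow, sq_abs,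
    sq_abs]
  ring

noncomputable def radialField (g : ℝ → ℝ) (v : E) : E := (g ‖v‖ / ‖v‖) • v

@[simp] theorem radialField_zero (g : ℝ → ℝ) : radialField g (0 : E) = 0 := by
  simp [radialField]

theorem radialField_eq_smul_normalize (g : ℝ → ℝ) (v : E) :
    radialField g v = g ‖v‖ • (‖v‖⁻¹ • v) := by
  rw [radialField, smul_smul, div_eq_mul_inv]

theorem norm_smul_inv_norm_real {v : E} (hv : v ≠ 0) : ‖‖v‖⁻¹ • v‖ = 1 := by
  simpa using norm_smul_inv_norm (𝕜 := ℝ) hv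

theorem norm_radialField {g : ℝ → ℝ} (hg0 : g 0 = 0) (v : E) : ‖radialField g v‖ = |g ‖v‖| := by
  rcases eq_or_ne v 0 with rfl | hv
  · simp [hg0]
  · rw [radialField_eq_smul_normalize g v, norm_smul, norm_smul_inv_norm_real hv, mul_one,
      Real.norm_eq_abs]

theorem lipschitzWith_radialField {g : ℝ → ℝ} {K : ℝ≥0} (hg : LipschitzWith K g)
    (hg0 : g 0 = 0) : LipschitzWith K (radialField g : E → E) := by
  have hgr (r : ℝ) (hr : 0 ≤ r) : |g r| ≤ K * r := by
    simpa [abs_of_nonneg hr] using hg.norm_le_mul hg0 r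
  refine LipschitzWith.of_dist_le_mul fun v₁ v₂ => ?_
  rw [dist_eq_norm, dist_eq_norm]
  rcases eq_or_ne v₂ 0 with rfl | hv₂
  · simpa [norm_radialField hg0] using hgr _ (norm_nonneg v₁)
  rcases eq_or_ne v₁ 0 with rfl | hv₁
  · simpa [norm_radialField hg0] using hgr _ (norm_nonneg v₂)
  set u₁ := ‖v₁‖⁻¹ • v₁
  set u₂ := ‖v₂‖⁻¹ • v₂
  have hu₁ : ‖u₁‖ = 1 := norm_smul_inv_norm_real hv₁
  have hu₂ : ‖u₂‖ = 1 := norm_smul_inv_norm_real hv₂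
  have hv (v : E) (hv : v ≠ 0) : v = ‖v‖ • (‖v‖⁻¹ • v) := by
    rw [smul_smul, mul_inv_cancel₀ (norm_ne_zero_iff.mpr hv), one_smul]
  have hdiff : (g ‖v₁‖ - g ‖v₂‖) ^ 2 ≤ (K * (‖v₁‖ - ‖v₂‖)) ^ 2 := by
    rw [sq_le_sq, abs_mul, NNReal.abs_eq]
    exact hg.dist_le_mul _ _
  have hprod : g ‖v₁‖ * g ‖v₂‖ ≤ (K * ‖v₁‖) * (K * ‖v₂‖) := by
    calc g ‖v₁‖ * g ‖v₂‖ ≤ |g ‖v₁‖| * |g ‖v₂‖| := by rw [← abs_mul]; exact le_abs_self _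
      _ ≤ _ := mul_le_mul (hgr _ (norm_nonneg _)) (hgr _ (norm_nonneg _)) (abs_nonneg _)
          (by positivity)
  refine (pow_le_pow_iff_left₀ (by positivity) (by positivity) two_ne_zero).mp ?_
  calc ‖radialField g v₁ - radialField g v₂‖ ^ 2
      = (g ‖v₁‖ - g ‖v₂‖) ^ 2 + g ‖v₁‖ * g ‖v₂‖ * ‖u₁ - u₂‖ ^ 2 := by
        rw [radialField_eq_smul_normalize g v₁, radialField_eq_smul_normalize g v₂,
          norm_smul_sub_smul_sq hu₁ hu₂]
    _ ≤ (K * (‖v₁‖ - ‖v₂‖)) ^ 2 + (K * ‖v₁‖) * (K * ‖v₂‖) * ‖u₁ - u₂‖ ^ 2 := by gcongr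
    _ = (K * ‖‖v₁‖ • u₁ - ‖v₂‖ • u₂‖) ^ 2 := by
        rw [mul_pow _ ‖_ - _‖, norm_smul_sub_smul_sq hu₁ hu₂]; ring
    _ = (K * ‖v₁ - v₂‖) ^ 2 := by rw [← hv v₁ hv₁, ← hv v₂ hv₂]

theorem hasGradientAt_comp_norm [CompleteSpace E] {f f' : ℝ → ℝ}
    (hf : ∀ s, HasDerivAt f (f' s) s) (hf'0 : f' 0 = 0) (v : E) :
    HasGradientAt (fun w => f ‖w‖) (radialField f' v) v := by
  rw [hasGradientAt_iff_hasFDerivAt]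
  rcases eq_or_ne v 0 with rfl | hv
  · have hf0 : (fun s => f s - f 0) =o[𝓝 0] fun s => s := by
      simpa [hf'0] using hasDerivAt_iff_isLittleO_nhds_zero.mp (hf 0)
    have hnorm : Tendsto (fun w : E => ‖w‖) (𝓝 0) (𝓝 0) := by
      simpa using (continuous_norm (E := E)).tendsto 0
    rw [radialField_zero, map_zero, hasFDerivAt_iff_isLittleO_nhds_zero]
    simpa [Function.comp_def] using isLittleO_norm_right.mp (hf0.comp_tendsto hnorm)
  · refine ((hf ‖v‖).comp_hasFDerivAt v (hasFDerivAt_norm hv)).congr_fderiv ?_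
    ext w
    simp only [smul_apply, coe_innerSL_apply, smul_eq_mul, toDual_apply_apply, radialField,
      real_inner_smul_left]
    field_simp

end RadialField

theorem deriv_zero_of_even {ρ : ℝ → ℝ} (hρe : ∀ s, ρ (-s) = ρ s) : deriv ρ 0 = 0 := by
  have h := deriv_comp_neg (f := ρ) (x := 0)
  simp only [hρe, neg_zero] at h
  linarith

theorem stmt18 {n : ℕ} (ρ : ℝ → ℝ) (hρ : ContDiff ℝ 1 ρ) (hρe : ∀ s, ρ (-s) = ρ s)
    (L : NNReal) (hL : LipschitzWith L (deriv ρ))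
    (ε : ℝ) (hε : 0 < ε) (x : EuclideanSpace ℝ (Fin n))
    (Φ : EuclideanSpace ℝ (Fin n) → EuclideanSpace ℝ (Fin n))
    (hΦ : ∀ y, Φ y = ((1 / ε) * deriv ρ (‖y - x‖ / ε) / ‖y - x‖) • (y - x)) :
    (∀ y, HasGradientAt (fun w => ρ (‖w - x‖ / ε)) (Φ y) y) ∧
    ∀ y₁ y₂, ‖Φ y₁ - Φ y₂‖ ≤ ((L : ℝ) / ε ^ 2) * ‖y₁ - y₂‖ := by
  set g : ℝ → ℝ := fun s => (1 / ε) * deriv ρ (s / ε)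
  have hΦg (y) : Φ y = radialField g (y - x) := hΦ y
  have hg0 : g 0 = 0 := by simp [g, deriv_zero_of_even hρe]
  have hdiff (s : ℝ) : HasDerivAt (fun s => ρ (s / ε)) (g s) s :=
    (((hρ.differentiable one_ne_zero) (s / ε)).hasDerivAt.comp s
      ((hasDerivAt_id s).div_const ε)).congr_deriv (by simp only [one_div, g]; ring)
  have hg : LipschitzWith (‖ε⁻¹‖₊ * (L * ‖ε⁻¹‖₊)) g := by
    have hg_eq : g = (ε⁻¹ • ·) ∘ deriv ρ ∘ (ε⁻¹ • ·) := by
      funext s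
      simp [g, div_eq_inv_mul]
    rw [hg_eq]
    exact (lipschitzWith_smul ε⁻¹).comp (hL.comp (lipschitzWith_smul ε⁻¹))
  have hK : ((‖ε⁻¹‖₊ * (L * ‖ε⁻¹‖₊) : ℝ≥0) : ℝ) = L / ε ^ 2 := by
    simp only [nnnorm_inv, NNReal.coe_mul, NNReal.coe_inv, coe_nnnorm, Real.norm_eq_abs,
      abs_of_pos hε]
    field_simp
  refine ⟨fun y => ?_, fun y₁ y₂ => ?_⟩
  · rw [hΦg, hasGradientAt_iff_hasFDerivAt]
    exact (hasFDerivAt_comp_sub x).mpr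
      ((hasGradientAt_comp_norm hdiff hg0 (y - x)).hasFDerivAt)
  · rw [hΦg, hΦg, ← dist_eq_norm, ← dist_eq_norm, ← dist_sub_right y₁ y₂ x, ← hK]
    exact (lipschitzWith_radialField hg hg0).dist_le_mul _ _
end
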